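/- arXiv:2309.11602 — 6 statements merged into one kernel-verified Lean document; each statement's English description precedes it below -/
import Mathlib

section
/- For 1 < i < m, Y_i^{(+)} := P(A_1^{(+)}(i) ∩ Ā_2 ∩ ⋯ ∩ Ā_m) = q_1² p^{m−1} (1 − p^{i−1} − (i−1) q_2 p^{i−2}). -/
open MeasureTheory ProbabilityTheory Finset Filter Asymptotics

/-!
On `plusEvent X m i` the window starting at `2` is clean unless `X (m + 1) = 1`. Once
`X (m + 1) = 1`, every window starting at `n ≤ i` holds two `+1`s, and a window starting at
`n > i` is contaminated exactly when its part beyond `m + 1` is; the smallest such part is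
`W = [m + 2, m + i]`. So the event is `plusEvent ∩ {X (m + 1) = 1} ∩ Bᶜ`, where `B` says that `W`
carries no `+1` and at most one `-1`. These depend on disjoint sets of coordinates, and `B` is the
disjoint union of the all-zero pattern on `W` and the `i - 1` patterns with a single `-1`, so
`P(B) = p ^ (i - 1) + (i - 1) q₂ p ^ (i - 2)`.
-/

/-- `contaminatedEvent X m n` is the event that the block `X n, X (n+1), ..., X (n+m-1)` is
at most `1+1` contaminated: it contains at most one value `+1` and at most one value `-1`
(all remaining entries being `0`, given that the values lie in `{0, +1, -1}`). -/
def contaminatedEvent {Ω : Type*} (X : ℕ → Ω → ℤ) (m n : ℕ) : Set Ω :=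
  {ω | ((Finset.Icc n (n + m - 1)).filter (fun i => X i ω = 1)).card ≤ 1 ∧
       ((Finset.Icc n (n + m - 1)).filter (fun i => X i ω = -1)).card ≤ 1}

/-- The event that `X 1, ..., X m` are all `0` (a pure run). -/
def pureEvent {Ω : Type*} (X : ℕ → Ω → ℤ) (m : ℕ) : Set Ω :=
  {ω | ∀ i ∈ Finset.Icc 1 m, X i ω = 0}

/-- The event that `X i = +1` and all the other entries among `X 1, ..., X m` are `0`. -/
def plusEvent {Ω : Type*} (X : ℕ → Ω → ℤ) (m i : ℕ) : Set Ω :=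
  {ω | X i ω = 1 ∧ ∀ j ∈ Finset.Icc 1 m, j ≠ i → X j ω = 0}

/-- The event that `X i = -1` and all the other entries among `X 1, ..., X m` are `0`. -/
def minusEvent {Ω : Type*} (X : ℕ → Ω → ℤ) (m i : ℕ) : Set Ω :=
  {ω | X i ω = -1 ∧ ∀ j ∈ Finset.Icc 1 m, j ≠ i → X j ω = 0}

/-- The event that `X i = +1`, `X j = -1` and all the other entries among
`X 1, ..., X m` are `0`. -/
def twoEvent {Ω : Type*} (X : ℕ → Ω → ℤ) (m i j : ℕ) : Set Ω :=
  {ω | X i ω = 1 ∧ X j ω = -1 ∧ ∀ l ∈ Finset.Icc 1 m, l ≠ i → l ≠ j → X l ω = 0}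

section Independence

variable {Ω ι β : Type*} [MeasurableSpace β] {X : ι → Ω → β}

lemma measurableSet_comap_of_determined [Countable β] [MeasurableSingletonClass β]
    {S : Finset ι} {A : Set Ω}
    (hA : ∀ ω ω', (∀ j ∈ S, X j ω = X j ω') → ω ∈ A → ω' ∈ A) :
    MeasurableSet[MeasurableSpace.comap (fun ω (j : S) => X j ω) inferInstance] A := by
  refine ⟨(fun ω (j : S) => X j ω) '' A, .of_discrete, ?_⟩
  ext ω
  refine ⟨fun ⟨ω', hω', h⟩ => hA ω' ω (fun j hj => congrFun h ⟨j, hj⟩) hω', fun h => ⟨ω, h, rfl⟩⟩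

variable [MeasurableSpace Ω] {P : Measure Ω}

lemma measurableSet_of_determined [Countable β] [MeasurableSingletonClass β]
    (hmeas : ∀ j, Measurable (X j)) {S : Finset ι} {A : Set Ω}
    (hA : ∀ ω ω', (∀ j ∈ S, X j ω = X j ω') → ω ∈ A → ω' ∈ A) : MeasurableSet A :=
  (measurable_pi_lambda (fun ω (j : S) => X j ω) fun j => hmeas j).comap_le _
    (measurableSet_comap_of_determined hA)

lemma measureReal_inter_eq_mul_of_determined [Countable β] [MeasurableSingletonClass β]
    (hindep : iIndepFun X P) (hmeas : ∀ j, Measurable (X j))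
    {S T : Finset ι} (hST : Disjoint S T) {A B : Set Ω}
    (hA : ∀ ω ω', (∀ j ∈ S, X j ω = X j ω') → ω ∈ A → ω' ∈ A)
    (hB : ∀ ω ω', (∀ j ∈ T, X j ω = X j ω') → ω ∈ B → ω' ∈ B) :
    P.real (A ∩ B) = P.real A * P.real B := by
  simp only [measureReal_def, (hindep.indepFun_finset S T hST hmeas).meas_inter
    (measurableSet_comap_of_determined hA) (measurableSet_comap_of_determined hB),
    ENNReal.toReal_mul]

variable [MeasurableSingletonClass β]

lemma measureReal_forall_mem_eq (hindep : iIndepFun X P) (s : Finset ι) (c : ι → β) :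
    P.real {ω | ∀ j ∈ s, X j ω = c j} = ∏ j ∈ s, P.real {ω | X j ω = c j} := by
  have hset : {ω | ∀ j ∈ s, X j ω = c j} = ⋂ j ∈ s, {ω | X j ω = c j} := by ext; simp
  rw [hset, measureReal_def, hindep.meas_biInter (s := fun j => {ω | X j ω = c j})
    (fun j _ => ⟨{c j}, measurableSet_singleton _, rfl⟩), ENNReal.toReal_prod]
  rfl

lemma measureReal_forall_mem_eq_const (hindep : iIndepFun X P) (s : Finset ι) {b : β} {r : ℝ}
    (hb : ∀ j, P.real {ω | X j ω = b} = r) :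
    P.real {ω | ∀ j ∈ s, X j ω = b} = r ^ s.card := by
  rw [measureReal_forall_mem_eq hindep s (fun _ => b), Finset.prod_congr rfl (fun j _ => hb j),
    prod_const]

lemma measureReal_eq_and_forall_ne_eq (hindep : iIndepFun X P) {s : Finset ι} {k : ι} (hk : k ∈ s)
    (a : β) {b : β} {r : ℝ} (hb : ∀ j, P.real {ω | X j ω = b} = r) :
    P.real {ω | X k ω = a ∧ ∀ j ∈ s, j ≠ k → X j ω = b} =
      P.real {ω | X k ω = a} * r ^ (s.card - 1) := by
  classical
  have hset : {ω | X k ω = a ∧ ∀ j ∈ s, j ≠ k → X j ω = b} =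
      {ω | ∀ j ∈ s, X j ω = Function.update (fun _ => b) k a j} := by
    ext ω
    simp only [Set.mem_ofPred_eq]
    refine ⟨fun ⟨hk', hs⟩ j hj => ?_, fun h => ⟨by simpa using h k hk, fun j hj hjk => ?_⟩⟩
    · rcases eq_or_ne j k with rfl | hjk
      · simpa using hk'
      · simpa [hjk] using hs j hj hjk
    · simpa [hjk] using h j hj
  rw [hset, measureReal_forall_mem_eq hindep, ← mul_prod_erase s _ hk,
    Function.update_self, ← card_erase_of_mem hk, ← prod_const, ← prod_congr rfl]
  intro j hj
  rw [Function.update_of_ne (ne_of_mem_erase hj), hb]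

end Independence

section Ternary

variable {Ω ι : Type*} {X : ι → Ω → ℤ}

def noPlusAtMostOneMinus (X : ι → Ω → ℤ) (W : Finset ι) : Set Ω :=
  {ω | (∀ j ∈ W, X j ω ≠ 1) ∧ ∀ k ∈ W, X k ω = -1 → ∀ l ∈ W, X l ω = -1 → k = l}

lemma noPlusAtMostOneMinus_eq_union (hval : ∀ j ω, X j ω = 0 ∨ X j ω = 1 ∨ X j ω = -1)
    (W : Finset ι) :
    noPlusAtMostOneMinus X W = {ω | ∀ j ∈ W, X j ω = 0} ∪
      ⋃ k ∈ W, {ω | X k ω = -1 ∧ ∀ j ∈ W, j ≠ k → X j ω = 0} := by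
  ext ω
  simp only [noPlusAtMostOneMinus, Set.mem_union, Set.mem_iUnion, Set.mem_ofPred_eq, exists_prop]
  constructor
  · rintro ⟨hplus, hminus⟩
    have hzero : ∀ j ∈ W, X j ω ≠ -1 → X j ω = 0 := fun j hj hj' =>
      (hval j ω).resolve_right (by rintro (h | h); exacts [hplus j hj h, hj' h])
    by_cases h : ∃ k ∈ W, X k ω = -1
    · obtain ⟨k, hk, hk'⟩ := h
      exact .inr ⟨k, hk, hk', fun j hj hjk => hzero j hj fun h => hjk (hminus j hj h k hk hk')⟩
    · push Not at h
      exact .inl fun j hj => hzero j hj (h j hj)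
  · rintro (hz | ⟨k, hk, hk', hz⟩)
    · exact ⟨fun j hj => by simp [hz j hj], fun k hk h => by simp [hz k hk] at h⟩
    · have heq : ∀ j ∈ W, X j ω ≠ 0 → j = k := fun j hj h => by_contra fun hjk => h (hz j hj hjk)
      refine ⟨fun j hj h => ?_, fun a ha h1 b hb h2 => ?_⟩
      · rw [heq j hj (by simp [h])] at h
        simp [hk'] at h
      · rw [heq a ha (by simp [h1]), heq b hb (by simp [h2])]

variable [MeasurableSpace Ω] {P : Measure Ω}

lemma measureReal_noPlusAtMostOneMinus [IsFiniteMeasure P] (hindep : iIndepFun X P)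
    (hmeas : ∀ j, Measurable (X j)) (hval : ∀ j ω, X j ω = 0 ∨ X j ω = 1 ∨ X j ω = -1)
    (W : Finset ι) {p q : ℝ} (h0 : ∀ j, P.real {ω | X j ω = 0} = p)
    (h2 : ∀ j, P.real {ω | X j ω = -1} = q) :
    P.real (noPlusAtMostOneMinus X W) = p ^ W.card + W.card * (q * p ^ (W.card - 1)) := by
  have hmeasZ : MeasurableSet {ω | ∀ j ∈ W, X j ω = 0} :=
    measurableSet_of_determined hmeas fun ω ω' h hω j hj => h j hj ▸ hω j hj
  have hmeasM : ∀ k ∈ W, MeasurableSet {ω | X k ω = -1 ∧ ∀ j ∈ W, j ≠ k → X j ω = 0} :=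
    fun k hk => measurableSet_of_determined hmeas fun ω ω' h ⟨hk', hz⟩ =>
      ⟨h k hk ▸ hk', fun j hj hjk => h j hj ▸ hz j hj hjk⟩
  rw [noPlusAtMostOneMinus_eq_union hval, measureReal_union ?disj (W.measurableSet_biUnion hmeasM)
      (measure_ne_top _ _) (measure_ne_top _ _),
    measureReal_biUnion_finset ?pairwise hmeasM, measureReal_forall_mem_eq_const hindep W h0,
    sum_congr rfl fun k hk => by rw [measureReal_eq_and_forall_ne_eq hindep hk _ h0, h2],
    sum_const, nsmul_eq_mul]
  case disj =>
    exact Set.disjoint_iUnion₂_right.2 fun k hk =>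
      Set.disjoint_left.2 fun ω hz ⟨hk', _⟩ => by simp [hz k hk] at hk'
  case pairwise =>
    exact fun k hk l _ hkl =>
      Set.disjoint_left.2 fun ω ⟨hk', _⟩ ⟨_, hz⟩ => by simp [hz k hk hkl] at hk'

end Ternary

section Windows

variable {Ω : Type*} {X : ℕ → Ω → ℤ} {m n i : ℕ} {ω : Ω}

lemma mem_contaminatedEvent_iff : ω ∈ contaminatedEvent X m n ↔
    (∀ a ∈ Icc n (n + m - 1), X a ω = 1 → ∀ b ∈ Icc n (n + m - 1), X b ω = 1 → a = b) ∧
    (∀ a ∈ Icc n (n + m - 1), X a ω = -1 → ∀ b ∈ Icc n (n + m - 1), X b ω = -1 → a = b) := by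
  simp only [contaminatedEvent, Set.mem_ofPred_eq, card_le_one, mem_filter, and_imp]

lemma mem_plusEvent_of_forall_eq {ω' : Ω} (hi : i ∈ Icc 1 m) (h : ∀ j ∈ Icc 1 m, X j ω = X j ω')
    (hω : ω ∈ plusEvent X m i) : ω' ∈ plusEvent X m i :=
  ⟨h i hi ▸ hω.1, fun j hj hji => h j hj ▸ hω.2 j hj hji⟩

lemma mem_noPlusAtMostOneMinus_of_forall_eq {ω' : Ω} {W : Finset ℕ}
    (h : ∀ j ∈ W, X j ω = X j ω') (hω : ω ∈ noPlusAtMostOneMinus X W) :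
    ω' ∈ noPlusAtMostOneMinus X W :=
  ⟨fun j hj => h j hj ▸ hω.1 j hj,
    fun a ha ha1 b hb hb1 => hω.2 a ha (h a ha ▸ ha1) b hb (h b hb ▸ hb1)⟩

lemma noPlusAtMostOneMinus_anti {W W' : Finset ℕ} (h : W ⊆ W') :
    noPlusAtMostOneMinus X W' ⊆ noPlusAtMostOneMinus X W :=
  fun _ ⟨hplus, hminus⟩ => ⟨fun j hj => hplus j (h hj),
    fun a ha ha1 b hb hb1 => hminus a (h ha) ha1 b (h hb) hb1⟩

lemma mem_contaminatedEvent_two (hi1 : 1 < i) (him : i ≤ m) (hω : ω ∈ plusEvent X m i)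
    (hm1 : X (m + 1) ω ≠ 1) : ω ∈ contaminatedEvent X m 2 := by
  obtain ⟨hi, hz⟩ := hω
  have hzero : ∀ j ∈ Icc 2 (2 + m - 1), j ≠ m + 1 → j ≠ i → X j ω = 0 := fun j hj hjm hji =>
    hz j (by simp only [mem_Icc] at hj ⊢; omega) hji
  have hplus : ∀ j ∈ Icc 2 (2 + m - 1), X j ω = 1 → j = i := fun j hj hj1 => by
    by_contra hji
    rcases eq_or_ne j (m + 1) with rfl | hjm
    · exact hm1 hj1
    · simp [hzero j hj hjm hji] at hj1
  have hminus : ∀ j ∈ Icc 2 (2 + m - 1), X j ω = -1 → j = m + 1 := fun j hj hj1 => by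
    by_contra hjm
    rcases eq_or_ne j i with rfl | hji
    · simp [hi] at hj1
    · simp [hzero j hj hjm hji] at hj1
  exact mem_contaminatedEvent_iff.2
    ⟨fun a ha ha1 b hb hb1 => (hplus a ha ha1).trans (hplus b hb hb1).symm,
      fun a ha ha1 b hb hb1 => (hminus a ha ha1).trans (hminus b hb hb1).symm⟩

lemma notMem_contaminatedEvent_of_le (hω : ω ∈ plusEvent X m i) (hm1 : X (m + 1) ω = 1)
    (h2n : 2 ≤ n) (hni : n ≤ i) (him : i ≤ m) : ω ∉ contaminatedEvent X m n := by
  rw [mem_contaminatedEvent_iff]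
  rintro ⟨hplus, -⟩
  have := hplus i (by simp only [mem_Icc]; omega) hω.1 (m + 1) (by simp only [mem_Icc]; omega) hm1
  omega

lemma mem_contaminatedEvent_iff_of_lt (hω : ω ∈ plusEvent X m i) (hm1 : X (m + 1) ω = 1)
    (h2n : 2 ≤ n) (hin : i < n) (hnm : n ≤ m) :
    ω ∈ contaminatedEvent X m n ↔ ω ∈ noPlusAtMostOneMinus X (Icc (m + 2) (n + m - 1)) := by
  have hzero : ∀ j ∈ Icc n (n + m - 1), j ≤ m → X j ω = 0 := fun j hj hjm =>
    hω.2 j (by simp only [mem_Icc] at hj ⊢; omega) (by simp only [mem_Icc] at hj; omega)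
  have htail : Icc (m + 2) (n + m - 1) ⊆ Icc n (n + m - 1) := Icc_subset_Icc (by omega) le_rfl
  have hm1_mem : m + 1 ∈ Icc n (n + m - 1) := by simp only [mem_Icc]; omega
  have htail_of_gt : ∀ j ∈ Icc n (n + m - 1), m + 1 < j → j ∈ Icc (m + 2) (n + m - 1) :=
    fun j hj hjm => by simp only [mem_Icc] at hj ⊢; omega
  rw [mem_contaminatedEvent_iff]
  constructor
  · rintro ⟨hplus, hminus⟩
    refine ⟨fun j hj hj1 => ?_, fun a ha ha1 b hb hb1 => hminus a (htail ha) ha1 b (htail hb) hb1⟩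
    have := hplus j (htail hj) hj1 (m + 1) hm1_mem hm1
    simp only [mem_Icc] at hj
    omega
  · rintro ⟨hplus, hminus⟩
    have hplus' : ∀ j ∈ Icc n (n + m - 1), X j ω = 1 → j = m + 1 := fun j hj hj1 => by
      rcases lt_trichotomy j (m + 1) with h | h | h
      · simp [hzero j hj (by omega)] at hj1
      · exact h
      · exact absurd hj1 (hplus j (htail_of_gt j hj h))
    have hminus' : ∀ j ∈ Icc n (n + m - 1), X j ω = -1 → j ∈ Icc (m + 2) (n + m - 1) :=
      fun j hj hj1 => by
        rcases lt_trichotomy j (m + 1) with h | rfl | h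
        · simp [hzero j hj (by omega)] at hj1
        · simp [hm1] at hj1
        · exact htail_of_gt j hj h
    exact ⟨fun a ha ha1 b hb hb1 => (hplus' a ha ha1).trans (hplus' b hb hb1).symm,
      fun a ha ha1 b hb hb1 => hminus a (hminus' a ha ha1) ha1 b (hminus' b hb hb1) hb1⟩

lemma plusEvent_inter_iInter_compl_contaminatedEvent (hi1 : 1 < i) (him : i < m) :
    plusEvent X m i ∩ ⋂ n ∈ Icc 2 m, (contaminatedEvent X m n)ᶜ =
      plusEvent X m i ∩ {ω | X (m + 1) ω = 1} ∩
        (noPlusAtMostOneMinus X (Icc (m + 2) (m + i)))ᶜ := by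
  ext ω
  simp only [Set.mem_inter_iff, Set.mem_iInter, Set.mem_compl_iff, mem_Icc, Set.mem_ofPred_eq]
  constructor
  · rintro ⟨hω, hbad⟩
    have hm1 : X (m + 1) ω = 1 := by_contra fun h =>
      hbad 2 ⟨le_rfl, by omega⟩ (mem_contaminatedEvent_two hi1 him.le hω h)
    refine ⟨⟨hω, hm1⟩, fun hNP => hbad (i + 1) ⟨by omega, him⟩ ?_⟩
    rw [mem_contaminatedEvent_iff_of_lt hω hm1 (by omega) (by omega) him,
      show i + 1 + m - 1 = m + i by omega]
    exact hNP
  · rintro ⟨⟨hω, hm1⟩, hNP⟩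
    refine ⟨hω, fun n ⟨h2n, hnm⟩ hn => ?_⟩
    rcases le_or_gt n i with hni | hin
    · exact notMem_contaminatedEvent_of_le hω hm1 h2n hni him.le hn
    · rw [mem_contaminatedEvent_iff_of_lt hω hm1 h2n hin hnm] at hn
      exact hNP (noPlusAtMostOneMinus_anti (Icc_subset_Icc le_rfl (by omega)) hn)

variable [MeasurableSpace Ω] {P : Measure Ω}

lemma measureReal_plusEvent_inter_eq_mul (hindep : iIndepFun X P)
    (hmeas : ∀ j, Measurable (X j)) (hi : i ∈ Icc 1 m) {W : Finset ℕ} (hW : ∀ j ∈ W, m + 1 < j) :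
    P.real (plusEvent X m i ∩ {ω | X (m + 1) ω = 1} ∩ (noPlusAtMostOneMinus X W)ᶜ) =
      P.real (plusEvent X m i) * P.real {ω | X (m + 1) ω = 1} *
        P.real (noPlusAtMostOneMinus X W)ᶜ := by
  rw [measureReal_inter_eq_mul_of_determined hindep hmeas (S := Icc 1 (m + 1)) (T := W)
      (A := plusEvent X m i ∩ {ω | X (m + 1) ω = 1}) (B := (noPlusAtMostOneMinus X W)ᶜ)
      (disjoint_left.2 fun j hj hj' => by have := hW j hj'; simp only [mem_Icc] at hj; omega)
      (fun ω ω' h ⟨hω, (hm1 : X (m + 1) ω = 1)⟩ =>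
        ⟨mem_plusEvent_of_forall_eq hi (fun j hj => h j (Icc_subset_Icc_right (by omega) hj)) hω,
          (h (m + 1) (by simp) ▸ hm1 : X (m + 1) ω' = 1)⟩)
      (fun ω ω' h hω hω' =>
        hω (mem_noPlusAtMostOneMinus_of_forall_eq (fun j hj => (h j hj).symm) hω')),
    measureReal_inter_eq_mul_of_determined hindep hmeas (S := Icc 1 m) (T := {m + 1})
      (A := plusEvent X m i) (B := {ω | X (m + 1) ω = 1}) (by simp)
      (fun ω ω' h => mem_plusEvent_of_forall_eq hi h)
      (fun ω ω' h (hω : X (m + 1) ω = 1) => (h (m + 1) (mem_singleton_self _) ▸ hω :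
        X (m + 1) ω' = 1))]

end Windows

theorem Y_plus_middle_general
    {Ω : Type*} [MeasurableSpace Ω] (P : Measure Ω) [IsProbabilityMeasure P]
    (X : ℕ → Ω → ℤ) (hmeas : ∀ i, Measurable (X i))
    (hindep : iIndepFun X P)
    (p q1 q2 : ℝ) (hp : 0 < p) (hq1 : 0 < q1) (hq2 : 0 < q2)
    (h0 : ∀ i, P {ω | X i ω = 0} = ENNReal.ofReal p)
    (h1 : ∀ i, P {ω | X i ω = 1} = ENNReal.ofReal q1)
    (h2 : ∀ i, P {ω | X i ω = -1} = ENNReal.ofReal q2)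
    (hval : ∀ i ω, X i ω = 0 ∨ X i ω = 1 ∨ X i ω = -1)
    (m i : ℕ) (hi1 : 1 < i) (him : i < m) :
    (P (plusEvent X m i ∩ ⋂ n ∈ Finset.Icc 2 m, (contaminatedEvent X m n)ᶜ)).toReal =
      q1 ^ 2 * p ^ (m - 1) * (1 - p ^ (i - 1) - ((i : ℝ) - 1) * q2 * p ^ (i - 2)) := by
  have hreal : ∀ j c r, 0 ≤ r → P {ω | X j ω = c} = ENNReal.ofReal r →
      P.real {ω | X j ω = c} = r := fun j c r hr h => by
    rw [measureReal_def, h, ENNReal.toReal_ofReal hr]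
  have e0 j := hreal j 0 p hp.le (h0 j)
  have e1 j := hreal j 1 q1 hq1.le (h1 j)
  have e2 j := hreal j (-1) q2 hq2.le (h2 j)
  have hi : i ∈ Icc 1 m := mem_Icc.2 ⟨hi1.le, him.le⟩
  rw [← measureReal_def, plusEvent_inter_iInter_compl_contaminatedEvent hi1 him,
    measureReal_plusEvent_inter_eq_mul hindep hmeas hi fun j hj => by simp only [mem_Icc] at hj; omega,
    probReal_compl_eq_one_sub (measurableSet_of_determined hmeas
      fun ω ω' => mem_noPlusAtMostOneMinus_of_forall_eq),
    measureReal_noPlusAtMostOneMinus hindep hmeas hval _ e0 e2,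
    plusEvent, measureReal_eq_and_forall_ne_eq hindep hi 1 e0, e1, e1]
  obtain ⟨k, rfl⟩ : ∃ k, i = k + 2 := ⟨i - 2, by omega⟩
  simp only [Nat.card_Icc, show m + (k + 2) + 1 - (m + 2) = k + 1 by omega, Nat.add_sub_cancel]
  push_cast
  ring

theorem Y_plus_middle
    {Ω : Type*} [MeasurableSpace Ω] (P : Measure Ω) [IsProbabilityMeasure P]
    (X : ℕ → Ω → ℤ) (hmeas : ∀ i, Measurable (X i))
    (hindep : iIndepFun X P)
    (p q1 q2 : ℝ) (hp : 0 < p) (hq1 : 0 < q1) (hq2 : 0 < q2) (hsum : p + q1 + q2 = 1)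
    (h0 : ∀ i, P {ω | X i ω = 0} = ENNReal.ofReal p)
    (h1 : ∀ i, P {ω | X i ω = 1} = ENNReal.ofReal q1)
    (h2 : ∀ i, P {ω | X i ω = -1} = ENNReal.ofReal q2)
    (hval : ∀ i ω, X i ω = 0 ∨ X i ω = 1 ∨ X i ω = -1)
    (m i : ℕ) (hm : 2 ≤ m) (hi1 : 1 < i) (him : i < m) :
    (P (plusEvent X m i ∩ ⋂ n ∈ Finset.Icc 2 m, (contaminatedEvent X m n)ᶜ)).toReal =
      q1 ^ 2 * p ^ (m - 1) * (1 - p ^ (i - 1) - ((i : ℝ) - 1) * q2 * p ^ (i - 2)) :=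
  Y_plus_middle_general P X hmeas hindep p q1 q2 hp hq1 hq2 h0 h1 h2 hval m i hi1 him
end

section
/- Y_m^{(+)} := P(A_1^{(+)}(m) ∩ Ā_2 ∩ ⋯ ∩ Ā_m) = q_1² p^{m−1}. -/
open MeasureTheory ProbabilityTheory Finset Filter Asymptotics

/-! On `plusEvent X m m` the window starting at `2` sees the `+1` at `m` plus the single new
entry `X (m + 1)`; it fails to be `1+1` contaminated only if `X (m + 1) = 1`. Conversely,
two `+1`'s at `m` and `m + 1` lie in every window `[n, n + m - 1]` with `2 ≤ n ≤ m`. So the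
event is exactly `X 1 = ⋯ = X (m - 1) = 0, X m = X (m + 1) = 1`, whose probability factorises
by independence as `p ^ (m - 1) * q1 ^ 2`. -/

section Events

variable {Ω : Type*} {X : ℕ → Ω → ℤ}

lemma notMem_contaminatedEvent_of_two_eq_one {m n i j : ℕ} {ω : Ω} (hij : i ≠ j)
    (hi : i ∈ Icc n (n + m - 1)) (hj : j ∈ Icc n (n + m - 1))
    (hXi : X i ω = 1) (hXj : X j ω = 1) : ω ∉ contaminatedEvent X m n := by
  rintro ⟨hplus, -⟩
  have : 1 < ((Icc n (n + m - 1)).filter (fun k => X k ω = 1)).card :=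
    one_lt_card.2 ⟨i, mem_filter.2 ⟨hi, hXi⟩, j, mem_filter.2 ⟨hj, hXj⟩, hij⟩
  omega

lemma mem_contaminatedEvent_two_of_mem_plusEvent {m : ℕ} (hm : 2 ≤ m) {ω : Ω}
    (hω : ω ∈ plusEvent X m m) (hnext : X (m + 1) ω ≠ 1) : ω ∈ contaminatedEvent X m 2 := by
  obtain ⟨hXm, hzero⟩ := hω
  have hwindow : 2 + m - 1 = m + 1 := by omega
  have hzero' : ∀ k ∈ Icc 2 (m + 1), k ≠ m → k ≠ m + 1 → X k ω = 0 := fun k hk hkm hkm' =>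
    hzero k (by simp only [mem_Icc] at hk ⊢; omega) hkm
  refine ⟨card_le_one_iff_subset_singleton.2 ⟨m, ?_⟩,
    card_le_one_iff_subset_singleton.2 ⟨m + 1, ?_⟩⟩
  all_goals
    intro k hk
    rw [hwindow, mem_filter] at hk
    rw [mem_singleton]
    by_contra hk'
  · have := hzero' k hk.1 hk' (by rintro rfl; exact hnext hk.2)
    omega
  · have := hzero' k hk.1 (by rintro rfl; omega) hk'
    omega

lemma plusEvent_inter_iInter_compl_contaminatedEvent_s5 {m : ℕ} (hm : 2 ≤ m) :
    plusEvent X m m ∩ ⋂ n ∈ Icc 2 m, (contaminatedEvent X m n)ᶜ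
      = ⋂ i ∈ Icc 1 (m + 1), X i ⁻¹' {if m ≤ i then 1 else 0} := by
  ext ω
  simp only [Set.mem_inter_iff, Set.mem_iInter, Set.mem_compl_iff, Set.mem_preimage,
    Set.mem_singleton_iff, mem_Icc]
  constructor
  · rintro ⟨hω, hnot⟩ i ⟨hi1, him⟩
    have hnext : X (m + 1) ω = 1 := by
      by_contra hnext
      exact hnot 2 ⟨le_rfl, hm⟩ (mem_contaminatedEvent_two_of_mem_plusEvent hm hω hnext)
    split_ifs with hmi
    · obtain rfl | rfl : i = m ∨ i = m + 1 := by omega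
      exacts [hω.1, hnext]
    · exact hω.2 i (mem_Icc.2 ⟨hi1, by omega⟩) (by omega)
  · intro h
    have hXm : X m ω = 1 := by simpa using h m ⟨by omega, by omega⟩
    have hnext : X (m + 1) ω = 1 := by simpa using h (m + 1) ⟨by omega, le_rfl⟩
    refine ⟨⟨hXm, fun j hj hjm => ?_⟩, fun n hn => ?_⟩
    · rw [mem_Icc] at hj
      simpa [show ¬m ≤ j by omega] using h j ⟨hj.1, by omega⟩
    · exact notMem_contaminatedEvent_of_two_eq_one (Nat.succ_ne_self m).symm
        (mem_Icc.2 ⟨by omega, by omega⟩) (mem_Icc.2 ⟨by omega, by omega⟩) hXm hnext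

end Events

lemma prod_measure_preimage_zeros_then_ones {Ω : Type*} [MeasurableSpace Ω] (P : Measure Ω)
    (X : ℕ → Ω → ℤ) {a b : ENNReal} (h0 : ∀ i, P {ω | X i ω = 0} = a)
    (h1 : ∀ i, P {ω | X i ω = 1} = b) {m : ℕ} (hm : 1 ≤ m) :
    ∏ i ∈ Icc 1 (m + 1), P (X i ⁻¹' {if m ≤ i then 1 else 0}) = a ^ (m - 1) * b ^ 2 := by
  obtain ⟨k, rfl⟩ := Nat.exists_eq_add_of_le' hm
  have hzeros : ∀ i ∈ Icc 1 k, P (X i ⁻¹' {if k + 1 ≤ i then 1 else 0}) = a := by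
    intro i hi
    rw [if_neg (by rw [mem_Icc] at hi; omega)]
    exact h0 i
  rw [prod_Icc_succ_top (by omega), prod_Icc_succ_top (by omega), prod_congr rfl hzeros,
    prod_const, Nat.card_Icc, if_pos le_rfl, if_pos (by omega)]
  simp only [Set.preimage, Set.mem_singleton_iff, h1, add_tsub_cancel_right, mul_assoc, sq]

theorem Y_plus_last_general
    {Ω : Type*} [MeasurableSpace Ω] (P : Measure Ω)
    (X : ℕ → Ω → ℤ)
    (hindep : iIndepFun X P)
    (p q1 : ℝ) (hp : 0 < p) (hq1 : 0 < q1)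
    (h0 : ∀ i, P {ω | X i ω = 0} = ENNReal.ofReal p)
    (h1 : ∀ i, P {ω | X i ω = 1} = ENNReal.ofReal q1)
    (m : ℕ) (hm : 2 ≤ m) :
    (P (plusEvent X m m ∩ ⋂ n ∈ Finset.Icc 2 m, (contaminatedEvent X m n)ᶜ)).toReal = q1 ^ 2 * p ^ (m - 1) := by
  rw [plusEvent_inter_iInter_compl_contaminatedEvent_s5 hm,
    hindep.measure_inter_preimage_eq_mul _ (fun _ _ => measurableSet_singleton _),
    prod_measure_preimage_zeros_then_ones P X h0 h1 (by omega), ENNReal.toReal_mul,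
    ENNReal.toReal_pow, ENNReal.toReal_pow, ENNReal.toReal_ofReal hp.le,
    ENNReal.toReal_ofReal hq1.le, mul_comm]

theorem Y_plus_last
    {Ω : Type*} [MeasurableSpace Ω] (P : Measure Ω) [IsProbabilityMeasure P]
    (X : ℕ → Ω → ℤ) (hmeas : ∀ i, Measurable (X i))
    (hindep : iIndepFun X P)
    (p q1 q2 : ℝ) (hp : 0 < p) (hq1 : 0 < q1) (hq2 : 0 < q2) (hsum : p + q1 + q2 = 1)
    (h0 : ∀ i, P {ω | X i ω = 0} = ENNReal.ofReal p)
    (h1 : ∀ i, P {ω | X i ω = 1} = ENNReal.ofReal q1)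
    (h2 : ∀ i, P {ω | X i ω = -1} = ENNReal.ofReal q2)
    (hval : ∀ i ω, X i ω = 0 ∨ X i ω = 1 ∨ X i ω = -1)
    (m : ℕ) (hm : 2 ≤ m) :
    (P (plusEvent X m m ∩ ⋂ n ∈ Finset.Icc 2 m, (contaminatedEvent X m n)ᶜ)).toReal = q1 ^ 2 * p ^ (m - 1) :=
  Y_plus_last_general P X hindep p q1 hp hq1 h0 h1 m hm
end

section
/- Y_{1,m} := P(A_1^{(2)}(1,m) ∩ Ā_2 ∩ ⋯ ∩ Ā_m) = q_1 q_2² p^{m−2}. -/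
open MeasureTheory ProbabilityTheory Finset Filter Asymptotics

/-!
On `twoEvent X m 1 m` the block `X 2, …, X (m+1)` consists of zeros, `X m = -1` and
the free entry `X (m+1)`; it is contaminated unless `X (m+1) = -1`. Conversely, if
`X m = X (m+1) = -1`, then every block starting at `n ∈ [2, m]` contains both indices `m` and
`m+1`, so none of them is at most `1+1` contaminated. Hence the event is the cylinder
`X 1 = 1, X 2 = ⋯ = X (m-1) = 0, X m = X (m+1) = -1`, whose probability is `q₁ q₂² p^(m-2)` by
independence.
-/

section Contamination

variable {Ω : Type*} {X : ℕ → Ω → ℤ} {m n : ℕ} {ω : Ω}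

lemma mem_contaminatedEvent_of_eq_zero {a b : ℕ}
    (hzero : ∀ i ∈ Icc n (n + m - 1), i ≠ a → i ≠ b → X i ω = 0)
    (ha : X a ω ≠ -1) (hb : X b ω ≠ 1) : ω ∈ contaminatedEvent X m n := by
  constructor
  · refine (card_le_card (t := {a}) fun i hi => ?_).trans (card_singleton a).le
    rw [mem_filter] at hi
    by_contra hia
    have hib : i ≠ b := by rintro rfl; exact hb hi.2
    simp [hzero i hi.1 (by simpa using hia) hib] at hi
  · refine (card_le_card (t := {b}) fun i hi => ?_).trans (card_singleton b).le
    rw [mem_filter] at hi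
    by_contra hib
    have hia : i ≠ a := by rintro rfl; exact ha hi.2
    simp [hzero i hi.1 hia (by simpa using hib)] at hi

lemma notMem_contaminatedEvent_of_two_minus {a b : ℕ} (hab : a ≠ b)
    (ha : a ∈ Icc n (n + m - 1)) (hb : b ∈ Icc n (n + m - 1))
    (hXa : X a ω = -1) (hXb : X b ω = -1) : ω ∉ contaminatedEvent X m n := by
  rintro ⟨-, hcard⟩
  have hsub : ({a, b} : Finset ℕ) ⊆ (Icc n (n + m - 1)).filter (fun i => X i ω = -1) := by
    simp [insert_subset_iff, ha, hb, hXa, hXb]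
  have := card_le_card hsub
  rw [card_pair hab] at this
  omega

end Contamination

def firstLastPattern (m i : ℕ) : ℤ :=
  if i = 1 then 1 else if i = m ∨ i = m + 1 then -1 else 0

lemma twoEvent_one_inter_iInter_compl_contaminatedEvent {Ω : Type*} (X : ℕ → Ω → ℤ) {m : ℕ}
    (hm : 2 ≤ m) :
    twoEvent X m 1 m ∩ ⋂ n ∈ Icc 2 m, (contaminatedEvent X m n)ᶜ
      = ⋂ i ∈ Icc 1 (m + 1), X i ⁻¹' {firstLastPattern m i} := by
  ext ω
  simp only [twoEvent, Set.mem_inter_iff, Set.mem_ofPred_eq, Set.mem_iInter, Set.mem_compl_iff,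
    Set.mem_preimage, Set.mem_singleton_iff, mem_Icc]
  constructor
  · rintro ⟨⟨hX1, hXm, hzero⟩, hclean⟩
    have hXm1 : X (m + 1) ω = -1 := by
      by_contra hne
      refine hclean 2 ⟨le_rfl, hm⟩ (mem_contaminatedEvent_of_eq_zero (a := m + 1) (b := m)
        (fun i hi hia hib => hzero i ?_ ?_ hib) hne (by rw [hXm]; decide))
      all_goals (rw [mem_Icc] at hi; omega)
    intro i hi
    unfold firstLastPattern
    split_ifs with h1 hlast
    · rwa [h1]
    · rcases hlast with rfl | rfl <;> assumption
    · exact hzero i ⟨hi.1, by omega⟩ h1 (not_or.1 hlast).1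
  · intro h
    have hX1 : X 1 ω = 1 := by simpa [firstLastPattern] using h 1 ⟨le_rfl, by omega⟩
    have hXm : X m ω = -1 := by
      simpa [firstLastPattern, show m ≠ 1 by omega] using h m ⟨by omega, by omega⟩
    have hXm1 : X (m + 1) ω = -1 := by
      simpa [firstLastPattern, show m ≠ 0 by omega] using h (m + 1) ⟨by omega, le_rfl⟩
    refine ⟨⟨hX1, hXm, fun l hl hl1 hlm => ?_⟩, fun n hn => ?_⟩
    · have hlm1 : l ≠ m + 1 := by omega
      simpa [firstLastPattern, hl1, hlm, hlm1] using h l ⟨hl.1, by omega⟩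
    · exact notMem_contaminatedEvent_of_two_minus (a := m) (b := m + 1) (by omega)
        (mem_Icc.2 ⟨hn.2, by omega⟩) (mem_Icc.2 ⟨by omega, by omega⟩) hXm hXm1

lemma measure_iInter_firstLastPattern {Ω : Type*} [MeasurableSpace Ω] {P : Measure Ω}
    {X : ℕ → Ω → ℤ} (hindep : iIndepFun X P) {p q1 q2 : ENNReal}
    (h0 : ∀ i, P {ω | X i ω = 0} = p) (h1 : ∀ i, P {ω | X i ω = 1} = q1)
    (h2 : ∀ i, P {ω | X i ω = -1} = q2) {m : ℕ} (hm : 2 ≤ m) :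
    P (⋂ i ∈ Icc 1 (m + 1), X i ⁻¹' {firstLastPattern m i}) = q1 * q2 ^ 2 * p ^ (m - 2) := by
  rw [hindep.measure_inter_preimage_eq_mul _ fun i _ => measurableSet_singleton _]
  obtain ⟨k, rfl⟩ := Nat.exists_eq_add_of_le' hm
  have hmiddle : ∀ i ∈ Icc 2 (k + 1), P (X i ⁻¹' {firstLastPattern (k + 2) i}) = p := by
    intro i hi
    rw [mem_Icc] at hi
    rw [firstLastPattern, if_neg (by omega), if_neg (by omega)]
    exact h0 i
  have hfirst : P (X 1 ⁻¹' {firstLastPattern (k + 2) 1}) = q1 := by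
    rw [firstLastPattern, if_pos rfl]
    exact h1 1
  have hlast : ∀ i, i = k + 2 ∨ i = k + 3 → P (X i ⁻¹' {firstLastPattern (k + 2) i}) = q2 := by
    intro i hi
    rw [firstLastPattern, if_neg (by omega), if_pos hi]
    exact h2 i
  rw [prod_Icc_succ_top (by omega), prod_Icc_succ_top (by omega),
    ← insert_Icc_add_one_left_eq_Icc (by omega), prod_insert (by simp),
    show 1 + 1 = 2 from rfl, prod_congr rfl hmiddle, prod_const, Nat.card_Icc, hfirst,
    hlast (k + 1 + 1) (by omega), hlast (k + 2 + 1) (by omega),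
    show k + 1 + 1 - 2 = k + 2 - 2 from rfl]
  ring

theorem Y_two_first_last_general
    {Ω : Type*} [MeasurableSpace Ω] (P : Measure Ω)
    (X : ℕ → Ω → ℤ)
    (hindep : iIndepFun X P)
    (p q1 q2 : ℝ) (hp : 0 < p) (hq1 : 0 < q1) (hq2 : 0 < q2)
    (h0 : ∀ i, P {ω | X i ω = 0} = ENNReal.ofReal p)
    (h1 : ∀ i, P {ω | X i ω = 1} = ENNReal.ofReal q1)
    (h2 : ∀ i, P {ω | X i ω = -1} = ENNReal.ofReal q2)
    (m : ℕ) (hm : 2 ≤ m) :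
    (P (twoEvent X m 1 m ∩ ⋂ n ∈ Finset.Icc 2 m, (contaminatedEvent X m n)ᶜ)).toReal = q1 * q2 ^ 2 * p ^ (m - 2) := by
  rw [twoEvent_one_inter_iInter_compl_contaminatedEvent X hm,
    measure_iInter_firstLastPattern hindep h0 h1 h2 hm, ENNReal.toReal_mul, ENNReal.toReal_mul,
    ENNReal.toReal_pow, ENNReal.toReal_pow, ENNReal.toReal_ofReal hq1.le,
    ENNReal.toReal_ofReal hq2.le, ENNReal.toReal_ofReal hp.le]

theorem Y_two_first_last
    {Ω : Type*} [MeasurableSpace Ω] (P : Measure Ω) [IsProbabilityMeasure P]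
    (X : ℕ → Ω → ℤ) (hmeas : ∀ i, Measurable (X i))
    (hindep : iIndepFun X P)
    (p q1 q2 : ℝ) (hp : 0 < p) (hq1 : 0 < q1) (hq2 : 0 < q2) (hsum : p + q1 + q2 = 1)
    (h0 : ∀ i, P {ω | X i ω = 0} = ENNReal.ofReal p)
    (h1 : ∀ i, P {ω | X i ω = 1} = ENNReal.ofReal q1)
    (h2 : ∀ i, P {ω | X i ω = -1} = ENNReal.ofReal q2)
    (hval : ∀ i ω, X i ω = 0 ∨ X i ω = 1 ∨ X i ω = -1)
    (m : ℕ) (hm : 2 ≤ m) :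
    (P (twoEvent X m 1 m ∩ ⋂ n ∈ Finset.Icc 2 m, (contaminatedEvent X m n)ᶜ)).toReal = q1 * q2 ^ 2 * p ^ (m - 2) :=
  Y_two_first_last_general P X hindep p q1 q2 hp hq1 hq2 h0 h1 h2 m hm
end

section
/- For 1 < j < m, Y_{1,j} := P(A_1^{(2)}(1,j) ∩ Ā_2 ∩ ⋯ ∩ Ā_m) = q_1 q_2² p^{m−2} (1 − p^{j−1} − (j−1) q_1 p^{j−2}). -/
open MeasureTheory ProbabilityTheory Finset Filter Asymptotics

/-!
On `A_1^{(2)}(1,j)` the only non-zero entries of `X 1, ..., X m` are the `+1` at `1` and the `-1`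
at `j`, and every window `X n, ..., X (n+m-1)` with `2 ≤ n ≤ m` must hold two `+1`s or two `-1`s.
For `n = 2` this forces `X (m+1) = -1`; then the windows with `n ≤ j` hold two `-1`s, and those
with `n > j` all contain `X (m+1), ..., X (m+j)`, which is everything non-zero in the shortest of
them (`n = j+1`). So the event is the cylinder fixing `X 1, ..., X (m+1)` minus the event that
`X (m+2), ..., X (m+j)` has no `-1` and at most one `+1`. The latter is the disjoint union of the
all-zero cylinder and the `j-1` cylinders with a single `+1`, and independence turns the
probability of each piece into a product of marginals.
-/

def cylinderEvent {Ω : Type*} (X : ℕ → Ω → ℤ) (s : Finset ℕ) (v : ℕ → ℤ) : Set Ω :=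
  ⋂ i ∈ s, {ω | X i ω = v i}

def noMinusAtMostOnePlus {Ω : Type*} (X : ℕ → Ω → ℤ) (s : Finset ℕ) : Set Ω :=
  {ω | #{i ∈ s | X i ω = 1} ≤ 1 ∧ ∀ i ∈ s, X i ω ≠ -1}

def firstMiddlePattern (m j : ℕ) : ℕ → ℤ :=
  fun i => if i = 1 then 1 else if i = j ∨ i = m + 1 then -1 else 0

section

variable {Ω : Type*} {X : ℕ → Ω → ℤ} {m j : ℕ}

@[simp]
lemma mem_cylinderEvent {s : Finset ℕ} {v : ℕ → ℤ} {ω : Ω} :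
    ω ∈ cylinderEvent X s v ↔ ∀ i ∈ s, X i ω = v i := by
  simp [cylinderEvent]

lemma cylinderEvent_inter_cylinderEvent {s t : Finset ℕ} (hts : Disjoint t s) (v w : ℕ → ℤ) :
    cylinderEvent X t v ∩ cylinderEvent X s w = cylinderEvent X (t ∪ s) (t.piecewise v w) := by
  ext ω
  simp only [Set.mem_inter_iff, mem_cylinderEvent, mem_union, or_imp, forall_and]
  refine and_congr (forall₂_congr fun i hi => by rw [piecewise_eq_of_mem _ _ _ hi])
    (forall₂_congr fun i hi => by rw [piecewise_eq_of_notMem _ _ _ (disjoint_right.1 hts hi)])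

lemma disjoint_cylinderEvent {s : Finset ℕ} {v w : ℕ → ℤ} {i : ℕ} (hi : i ∈ s)
    (hvw : v i ≠ w i) : Disjoint (cylinderEvent X s v) (cylinderEvent X s w) :=
  Set.disjoint_left.2 fun _ hv hw => hvw <| (mem_cylinderEvent.1 hv i hi).symm.trans
    (mem_cylinderEvent.1 hw i hi)

lemma noMinusAtMostOnePlus_eq_union (hval : ∀ i ω, X i ω = 0 ∨ X i ω = 1 ∨ X i ω = -1)
    (s : Finset ℕ) :
    noMinusAtMostOnePlus X s =
      cylinderEvent X s 0 ∪ ⋃ k ∈ s, cylinderEvent X s (Pi.single k 1) := by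
  ext ω
  simp only [noMinusAtMostOnePlus, Set.mem_ofPred_eq, Set.mem_union, Set.mem_iUnion,
    mem_cylinderEvent, exists_prop, Pi.zero_apply]
  constructor
  · rintro ⟨hplus, hminus⟩
    by_cases hk : ∃ k ∈ s, X k ω = 1
    · obtain ⟨k, hk, hk1⟩ := hk
      refine Or.inr ⟨k, hk, fun i hi => ?_⟩
      rcases eq_or_ne i k with rfl | hik
      · simpa using hk1
      rw [Pi.single_eq_of_ne hik]
      rcases hval i ω with h | h | h
      · exact h
      · exact absurd (card_le_one.1 hplus i (by simp [hi, h]) k (by simp [hk, hk1])) hik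
      · exact absurd h (hminus i hi)
    · push Not at hk
      exact Or.inl fun i hi => (hval i ω).resolve_right (not_or.2 ⟨hk i hi, hminus i hi⟩)
  · rintro (h | ⟨k, -, h⟩)
    · refine ⟨?_, fun i hi => by simp [h i hi]⟩
      rw [filter_eq_empty_iff.2 fun i hi => by simp [h i hi], card_empty]
      exact zero_le_one
    · have hk : ∀ i ∈ s, X i ω = 1 → i = k := fun i hi h1 => by
        by_contra hik
        rw [h i hi, Pi.single_eq_of_ne hik] at h1
        exact zero_ne_one h1
      refine ⟨card_le_one.2 fun a ha b hb => ?_, fun i hi => ?_⟩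
      · rw [mem_filter] at ha hb
        rw [hk a ha.1 ha.2, hk b hb.1 hb.2]
      · rw [h i hi, Pi.single_apply]
        split_ifs <;> decide

lemma twoEvent_inter_eq_cylinderEvent (hj1 : 1 < j) (hjm : j ≤ m) :
    twoEvent X m 1 j ∩ {ω | X (m + 1) ω = -1} =
      cylinderEvent X (Icc 1 (m + 1)) (firstMiddlePattern m j) := by
  ext ω
  simp only [twoEvent, firstMiddlePattern, Set.mem_inter_iff, Set.mem_ofPred_eq,
    mem_cylinderEvent, mem_Icc]
  constructor
  · rintro ⟨⟨h1, hj, h0⟩, hm1⟩ i hi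
    split_ifs with hi1 hij
    · rwa [hi1]
    · rcases hij with rfl | rfl <;> assumption
    · exact h0 i ⟨hi.1, by omega⟩ hi1 (by omega)
  · intro h
    refine ⟨⟨by simpa using h 1 ⟨le_rfl, by omega⟩,
      by simpa [hj1.ne'] using h j ⟨by omega, by omega⟩, fun l hl hl1 hlj => ?_⟩,
      by simpa [show m ≠ 0 by omega] using h (m + 1) ⟨by omega, le_rfl⟩⟩
    simpa [hl1, hlj, show l ≠ m + 1 by omega] using h l ⟨hl.1, by omega⟩

lemma ne_one_of_mem_twoEvent {ω : Ω} (hω : ω ∈ twoEvent X m 1 j) {i : ℕ} (h2i : 2 ≤ i)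
    (him : i ≤ m) : X i ω ≠ 1 := by
  obtain ⟨-, hj, h0⟩ := hω
  rcases eq_or_ne i j with rfl | hij
  · simp [hj]
  · simp [h0 i (mem_Icc.2 ⟨by omega, him⟩) (by omega) hij]

lemma eq_of_mem_twoEvent {ω : Ω} (hω : ω ∈ twoEvent X m 1 j) {i : ℕ} (h2i : 2 ≤ i)
    (him : i ≤ m) (hi : X i ω = -1) : i = j := by
  by_contra hij
  simp [hω.2.2 i (mem_Icc.2 ⟨by omega, him⟩) (by omega) hij] at hi

lemma forall_notMem_contaminatedEvent_iff {ω : Ω} (hω : ω ∈ twoEvent X m 1 j) (hj1 : 1 < j)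
    (hjm : j < m) :
    (∀ n ∈ Icc 2 m, ω ∉ contaminatedEvent X m n) ↔
      X (m + 1) ω = -1 ∧ ω ∉ noMinusAtMostOnePlus X (Icc (m + 2) (m + j)) := by
  constructor
  · intro hA
    have hm1 : X (m + 1) ω = -1 := by
      by_contra hne
      refine hA 2 (mem_Icc.2 ⟨le_rfl, by omega⟩) ⟨?_, ?_⟩
      · refine card_le_one_iff_subset_singleton.2 ⟨m + 1, fun i hi => ?_⟩
        rw [mem_filter, mem_Icc] at hi
        have : ¬ i ≤ m := fun him => ne_one_of_mem_twoEvent hω hi.1.1 him hi.2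
        simp only [mem_singleton]; omega
      · refine card_le_one_iff_subset_singleton.2 ⟨j, fun i hi => ?_⟩
        rw [mem_filter, mem_Icc] at hi
        rw [mem_singleton]
        by_cases him : i ≤ m
        · exact eq_of_mem_twoEvent hω hi.1.1 him hi.2
        · obtain rfl : i = m + 1 := by omega
          exact absurd hi.2 hne
    refine ⟨hm1, fun hN => hA (j + 1) (mem_Icc.2 ⟨by omega, by omega⟩) ⟨?_, ?_⟩⟩
    · refine (card_le_card fun i hi => ?_).trans hN.1
      rw [mem_filter, mem_Icc] at hi ⊢
      have : ¬ i ≤ m := fun him => ne_one_of_mem_twoEvent hω (by omega) him hi.2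
      have : i ≠ m + 1 := by rintro rfl; simp [hm1] at hi
      exact ⟨⟨by omega, by omega⟩, hi.2⟩
    · refine card_le_one_iff_subset_singleton.2 ⟨m + 1, fun i hi => ?_⟩
      rw [mem_filter, mem_Icc] at hi
      have : ¬ i ≤ m := fun him => by have := eq_of_mem_twoEvent hω (by omega) him hi.2; omega
      have : ¬ m + 2 ≤ i := fun hi2 => hN.2 i (mem_Icc.2 ⟨hi2, by omega⟩) hi.2
      simp only [mem_singleton]; omega
  · rintro ⟨hm1, hN⟩ n hn ⟨hplus, hminus⟩
    rw [mem_Icc] at hn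
    simp only [noMinusAtMostOnePlus, Set.mem_ofPred_eq, not_and_or, not_le, not_forall,
      not_not] at hN
    rcases le_or_gt n j with hnj | hnj
    · exact hminus.not_gt (one_lt_card.2 ⟨j, mem_filter.2 ⟨mem_Icc.2 ⟨hnj, by omega⟩, hω.2.1⟩,
        m + 1, mem_filter.2 ⟨mem_Icc.2 ⟨by omega, by omega⟩, hm1⟩, by omega⟩)
    rcases hN with hG | ⟨i, hi, hi'⟩
    · refine hplus.not_gt (hG.trans_le (card_le_card (filter_subset_filter _ fun i hi => ?_)))
      rw [mem_Icc] at hi ⊢; omega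
    · rw [mem_Icc] at hi
      exact hminus.not_gt (one_lt_card.2 ⟨m + 1,
        mem_filter.2 ⟨mem_Icc.2 ⟨by omega, by omega⟩, hm1⟩, i,
        mem_filter.2 ⟨mem_Icc.2 ⟨by omega, by omega⟩, hi'⟩, by omega⟩)

lemma twoEvent_inter_iInter_compl_contaminatedEvent (hj1 : 1 < j) (hjm : j < m) :
    twoEvent X m 1 j ∩ ⋂ n ∈ Icc 2 m, (contaminatedEvent X m n)ᶜ =
      cylinderEvent X (Icc 1 (m + 1)) (firstMiddlePattern m j) \
        noMinusAtMostOnePlus X (Icc (m + 2) (m + j)) := by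
  rw [← twoEvent_inter_eq_cylinderEvent hj1 hjm.le]
  ext ω
  simp only [Set.mem_inter_iff, Set.mem_iInter₂, Set.mem_compl_iff, Set.mem_sdiff,
    Set.mem_ofPred_eq, and_assoc]
  exact and_congr_right fun hω => forall_notMem_contaminatedEvent_iff hω hj1 hjm

variable [MeasurableSpace Ω] {P : Measure Ω}

lemma measurableSet_cylinderEvent (hmeas : ∀ i, Measurable (X i)) (s : Finset ℕ) (v : ℕ → ℤ) :
    MeasurableSet (cylinderEvent X s v) :=
  .biInter s.countable_toSet fun i _ => hmeas i (measurableSet_singleton (v i))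

lemma measurableSet_noMinusAtMostOnePlus (hmeas : ∀ i, Measurable (X i))
    (hval : ∀ i ω, X i ω = 0 ∨ X i ω = 1 ∨ X i ω = -1) (s : Finset ℕ) :
    MeasurableSet (noMinusAtMostOnePlus X s) := by
  rw [noMinusAtMostOnePlus_eq_union hval]
  exact (measurableSet_cylinderEvent hmeas s 0).union
    (.biUnion s.countable_toSet fun k _ => measurableSet_cylinderEvent hmeas s _)

lemma measureReal_cylinderEvent (hindep : iIndepFun X P) (s : Finset ℕ) (v : ℕ → ℤ) :
    P.real (cylinderEvent X s v) = ∏ i ∈ s, P.real {ω | X i ω = v i} := by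
  rw [measureReal_def, cylinderEvent, hindep.meas_biInter (s := fun i => {ω | X i ω = v i})
    fun i _ => ⟨{v i}, measurableSet_singleton _, rfl⟩, ENNReal.toReal_prod]
  rfl

lemma measureReal_cylinderEvent_inter (hindep : iIndepFun X P) {s t : Finset ℕ}
    (hts : Disjoint t s) (v w : ℕ → ℤ) :
    P.real (cylinderEvent X t v ∩ cylinderEvent X s w) =
      P.real (cylinderEvent X t v) * P.real (cylinderEvent X s w) := by
  simp only [cylinderEvent_inter_cylinderEvent hts, measureReal_cylinderEvent hindep,
    prod_union hts]
  congr 1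
  · exact prod_congr rfl fun i hi => by rw [piecewise_eq_of_mem _ _ _ hi]
  · exact prod_congr rfl fun i hi => by
      rw [piecewise_eq_of_notMem _ _ _ (disjoint_right.1 hts hi)]

lemma measureReal_cylinderEvent_of_support (hindep : iIndepFun X P) {p : ℝ}
    (h0 : ∀ i, P.real {ω | X i ω = 0} = p) {s u : Finset ℕ} (hus : u ⊆ s) {v : ℕ → ℤ}
    (hv : ∀ i ∈ s \ u, v i = 0) :
    P.real (cylinderEvent X s v) = (∏ i ∈ u, P.real {ω | X i ω = v i}) * p ^ (#s - #u) := by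
  rw [measureReal_cylinderEvent hindep, ← prod_sdiff hus,
    prod_congr rfl fun i hi => by rw [hv i hi, h0], prod_const, card_sdiff_of_subset hus, mul_comm]

lemma measureReal_cylinderEvent_inter_noMinusAtMostOnePlus [IsFiniteMeasure P]
    (hmeas : ∀ i, Measurable (X i)) (hindep : iIndepFun X P)
    (hval : ∀ i ω, X i ω = 0 ∨ X i ω = 1 ∨ X i ω = -1) {p q : ℝ}
    (h0 : ∀ i, P.real {ω | X i ω = 0} = p) (h1 : ∀ i, P.real {ω | X i ω = 1} = q)
    {s t : Finset ℕ} (hts : Disjoint t s) (v : ℕ → ℤ) :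
    P.real (cylinderEvent X t v ∩ noMinusAtMostOnePlus X s) =
      P.real (cylinderEvent X t v) * (p ^ #s + #s * q * p ^ (#s - 1)) := by
  have hzero : P.real (cylinderEvent X s 0) = p ^ #s := by
    simpa using measureReal_cylinderEvent_of_support hindep h0 (empty_subset s) (v := 0)
      fun _ _ => rfl
  have hsingle : ∀ k ∈ s, P.real (cylinderEvent X s (Pi.single k 1)) = q * p ^ (#s - 1) := by
    intro k hk
    rw [measureReal_cylinderEvent_of_support hindep h0 (singleton_subset_iff.2 hk)
      fun i hi => Pi.single_eq_of_ne (by simpa using (mem_sdiff.1 hi).2) _, prod_singleton,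
      Pi.single_eq_same, h1, card_singleton]
  have hdisj : Disjoint (cylinderEvent X t v ∩ cylinderEvent X s 0)
      (⋃ k ∈ s, cylinderEvent X t v ∩ cylinderEvent X s (Pi.single k 1)) :=
    Set.disjoint_iUnion₂_right.2 fun k hk =>
      (disjoint_cylinderEvent hk (by simp)).mono Set.inter_subset_right Set.inter_subset_right
  have hpairwise : (s : Set ℕ).PairwiseDisjoint
      fun k => cylinderEvent X t v ∩ cylinderEvent X s (Pi.single k 1) :=
    fun k hk k' _ hkk' => (disjoint_cylinderEvent (X := X) hk (by simp [hkk'.symm])).mono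
      Set.inter_subset_right Set.inter_subset_right
  have hm (w : ℕ → ℤ) : MeasurableSet (cylinderEvent X t v ∩ cylinderEvent X s w) :=
    (measurableSet_cylinderEvent hmeas t v).inter (measurableSet_cylinderEvent hmeas s w)
  rw [noMinusAtMostOnePlus_eq_union hval, Set.inter_union_distrib_left, Set.inter_iUnion₂,
    measureReal_union hdisj (.biUnion s.countable_toSet fun k _ => hm _) (measure_ne_top P _)
      (measure_ne_top P _),
    measureReal_biUnion_finset hpairwise fun k _ => hm _,
    measureReal_cylinderEvent_inter hindep hts, hzero,
    sum_congr rfl fun k hk => by rw [measureReal_cylinderEvent_inter hindep hts, hsingle k hk],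
    sum_const, nsmul_eq_mul]
  ring

lemma measureReal_cylinderEvent_firstMiddlePattern (hindep : iIndepFun X P) {p q1 q2 : ℝ}
    (h0 : ∀ i, P.real {ω | X i ω = 0} = p)
    (h1 : ∀ i, P.real {ω | X i ω = 1} = q1) (h2 : ∀ i, P.real {ω | X i ω = -1} = q2)
    (hj1 : 1 < j) (hjm : j < m) :
    P.real (cylinderEvent X (Icc 1 (m + 1)) (firstMiddlePattern m j)) =
      q1 * q2 ^ 2 * p ^ (m - 2) := by
  have hsub : ({1, j, m + 1} : Finset ℕ) ⊆ Icc 1 (m + 1) := by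
    intro i; simp only [mem_insert, mem_singleton, mem_Icc]; omega
  have h1j : 1 ∉ ({j, m + 1} : Finset ℕ) := by simp only [mem_insert, mem_singleton]; omega
  have hjm1 : j ∉ ({m + 1} : Finset ℕ) := by simp only [mem_singleton]; omega
  rw [measureReal_cylinderEvent_of_support hindep h0 hsub fun i hi => ?_, prod_insert h1j,
    prod_insert hjm1, prod_singleton, card_insert_of_notMem h1j, card_insert_of_notMem hjm1,
    card_singleton, Nat.card_Icc]
  · have hj : firstMiddlePattern m j j = -1 := by simp [firstMiddlePattern, hj1.ne']
    have hm1 : firstMiddlePattern m j (m + 1) = -1 := by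
      simp [firstMiddlePattern, show m ≠ 0 by omega]
    rw [hj, hm1, firstMiddlePattern, if_pos rfl, h1, h2, h2,
      show m + 1 + 1 - 1 - (1 + 1 + 1) = m - 2 by omega]
    ring
  · have : i ≠ 1 ∧ i ≠ j ∧ i ≠ m + 1 := by simpa using (mem_sdiff.1 hi).2
    simp [firstMiddlePattern, this]

end

theorem Y_two_first_middle_general
    {Ω : Type*} [MeasurableSpace Ω] (P : Measure Ω) [IsProbabilityMeasure P]
    (X : ℕ → Ω → ℤ) (hmeas : ∀ i, Measurable (X i))
    (hindep : iIndepFun X P)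
    (p q1 q2 : ℝ) (hp : 0 < p) (hq1 : 0 < q1) (hq2 : 0 < q2)
    (h0 : ∀ i, P {ω | X i ω = 0} = ENNReal.ofReal p)
    (h1 : ∀ i, P {ω | X i ω = 1} = ENNReal.ofReal q1)
    (h2 : ∀ i, P {ω | X i ω = -1} = ENNReal.ofReal q2)
    (hval : ∀ i ω, X i ω = 0 ∨ X i ω = 1 ∨ X i ω = -1)
    (m j : ℕ) (hj1 : 1 < j) (hjm : j < m) :
    (P (twoEvent X m 1 j ∩ ⋂ n ∈ Finset.Icc 2 m, (contaminatedEvent X m n)ᶜ)).toReal =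
      q1 * q2 ^ 2 * p ^ (m - 2) *
        (1 - p ^ (j - 1) - ((j : ℝ) - 1) * q1 * p ^ (j - 2)) := by
  have h0' (i : ℕ) : P.real {ω | X i ω = 0} = p := by
    rw [measureReal_def, h0, ENNReal.toReal_ofReal hp.le]
  have h1' (i : ℕ) : P.real {ω | X i ω = 1} = q1 := by
    rw [measureReal_def, h1, ENNReal.toReal_ofReal hq1.le]
  have h2' (i : ℕ) : P.real {ω | X i ω = -1} = q2 := by
    rw [measureReal_def, h2, ENNReal.toReal_ofReal hq2.le]
  have hdisj : Disjoint (Icc 1 (m + 1)) (Icc (m + 2) (m + j)) :=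
    disjoint_left.2 fun i hi hi' => by rw [mem_Icc] at hi hi'; omega
  have hsplit := measureReal_sdiff_add_inter (μ := P)
    (s := cylinderEvent X (Icc 1 (m + 1)) (firstMiddlePattern m j))
    (measurableSet_noMinusAtMostOnePlus hmeas hval (Icc (m + 2) (m + j)))
  rw [measureReal_cylinderEvent_inter_noMinusAtMostOnePlus hmeas hindep hval h0' h1' hdisj,
    measureReal_cylinderEvent_firstMiddlePattern hindep h0' h1' h2' hj1 hjm, Nat.card_Icc,
    show m + j + 1 - (m + 2) = j - 1 by omega, show j - 1 - 1 = j - 2 by omega,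
    Nat.cast_sub hj1.le, Nat.cast_one] at hsplit
  rw [← measureReal_def, twoEvent_inter_iInter_compl_contaminatedEvent hj1 hjm]
  linear_combination hsplit

theorem Y_two_first_middle
    {Ω : Type*} [MeasurableSpace Ω] (P : Measure Ω) [IsProbabilityMeasure P]
    (X : ℕ → Ω → ℤ) (hmeas : ∀ i, Measurable (X i))
    (hindep : iIndepFun X P)
    (p q1 q2 : ℝ) (hp : 0 < p) (hq1 : 0 < q1) (hq2 : 0 < q2) (hsum : p + q1 + q2 = 1)
    (h0 : ∀ i, P {ω | X i ω = 0} = ENNReal.ofReal p)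
    (h1 : ∀ i, P {ω | X i ω = 1} = ENNReal.ofReal q1)
    (h2 : ∀ i, P {ω | X i ω = -1} = ENNReal.ofReal q2)
    (hval : ∀ i ω, X i ω = 0 ∨ X i ω = 1 ∨ X i ω = -1)
    (m j : ℕ) (hm : 2 ≤ m) (hj1 : 1 < j) (hjm : j < m) :
    (P (twoEvent X m 1 j ∩ ⋂ n ∈ Finset.Icc 2 m, (contaminatedEvent X m n)ᶜ)).toReal =
      q1 * q2 ^ 2 * p ^ (m - 2) *
        (1 - p ^ (j - 1) - ((j : ℝ) - 1) * q1 * p ^ (j - 2)) :=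
  Y_two_first_middle_general P X hmeas hindep p q1 q2 hp hq1 hq2 h0 h1 h2 hval m j hj1 hjm
end

section
/- For 1 < i < m, Y_{i,m} := P(A_1^{(2)}(i,m) ∩ Ā_2 ∩ ⋯ ∩ Ā_m) = q_1 q_2 p^{m−2} ( q_1 (1 − p^{i−1}) + q_2 ). -/
open MeasureTheory ProbabilityTheory Finset Filter Asymptotics

/-
On `twoEvent X m i m` the entries `X 1, …, X m` are fixed, and every block starting at
`n ∈ [2, m]` contains the `-1` at `m`, and also the `+1` at `i` when `n ≤ i`. Block `2` then
forces `X (m+1) = ±1`. If `X (m+1) = -1`, every block holds two `-1`s. If `X (m+1) = +1`, the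
blocks with `n ≤ i` hold two `+1`s, and the others are spoiled exactly when one of
`X (m+2), …, X (m+i)` is nonzero, block `i+1` being the binding one. So the event is a cylinder
with `X (m+1) = -1` plus the difference of two nested cylinders with `X (m+1) = +1`, and
independence gives `q₁ q₂ p^(m-2) (q₂ + q₁ - q₁ p^(i-1))`.
-/

lemma Finset.prod_eq_prod_mul_pow_card_sdiff {α M : Type*} [CommMonoid M] [DecidableEq α]
    {s t : Finset α} (hts : t ⊆ s) {f : α → M} {c : M} (hc : ∀ j ∈ s \ t, f j = c) :
    ∏ j ∈ s, f j = (∏ j ∈ t, f j) * c ^ (#s - #t) := by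
  rw [← prod_sdiff hts, prod_eq_pow_card hc, card_sdiff_of_subset hts, mul_comm]

section Pattern

variable {Ω ι β : Type*}

def patternEvent (X : ι → Ω → β) (s : Finset ι) (g : ι → β) : Set Ω :=
  {ω | ∀ j ∈ s, X j ω = g j}

variable {X : ι → Ω → β} {s t : Finset ι} {g g' : ι → β}

lemma patternEvent_eq_biInter : patternEvent X s g = ⋂ j ∈ s, X j ⁻¹' {g j} := by
  ext ω
  simp [patternEvent]

lemma patternEvent_anti (hst : s ⊆ t) : patternEvent X t g ⊆ patternEvent X s g :=
  fun _ hω j hj => hω j (hst hj)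

lemma disjoint_patternEvent {j : ι} (hs : j ∈ s) (ht : j ∈ t) (hne : g j ≠ g' j) :
    Disjoint (patternEvent X s g) (patternEvent X t g') :=
  Set.disjoint_left.2 fun _ hω hω' => hne ((hω j hs).symm.trans (hω' j ht))

variable [MeasurableSpace Ω] [MeasurableSpace β] [MeasurableSingletonClass β]

lemma measurableSet_patternEvent (hmeas : ∀ j, Measurable (X j)) :
    MeasurableSet (patternEvent X s g) := by
  rw [patternEvent_eq_biInter]
  exact Finset.measurableSet_biInter s fun j _ => hmeas j (measurableSet_singleton _)

lemma measureReal_patternEvent {P : Measure Ω} (hindep : iIndepFun X P) :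
    P.real (patternEvent X s g) = ∏ j ∈ s, P.real {ω | X j ω = g j} := by
  rw [measureReal_def, patternEvent_eq_biInter,
    hindep.meas_biInter fun j _ => ⟨{g j}, measurableSet_singleton _, rfl⟩, ENNReal.toReal_prod]
  rfl

end Pattern

section Blocks

variable {Ω : Type*} {X : ℕ → Ω → ℤ} {m n i : ℕ} {ω : Ω}

lemma mem_contaminatedEvent_of_unique {a b : ℕ}
    (h1 : ∀ j ∈ Icc n (n + m - 1), X j ω = 1 → j = a)
    (h2 : ∀ j ∈ Icc n (n + m - 1), X j ω = -1 → j = b) :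
    ω ∈ contaminatedEvent X m n := by
  refine ⟨card_le_one.2 ?_, card_le_one.2 ?_⟩ <;> simp only [mem_filter]
  · exact fun j hj k hk => (h1 j hj.1 hj.2).trans (h1 k hk.1 hk.2).symm
  · exact fun j hj k hk => (h2 j hj.1 hj.2).trans (h2 k hk.1 hk.2).symm

lemma notMem_contaminatedEvent_of_pair {c : ℤ} (hc : c = 1 ∨ c = -1) {a b : ℕ} (hab : a ≠ b)
    (ha : a ∈ Icc n (n + m - 1)) (hb : b ∈ Icc n (n + m - 1)) (hXa : X a ω = c)
    (hXb : X b ω = c) : ω ∉ contaminatedEvent X m n := by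
  rintro ⟨h1, h2⟩
  rcases hc with rfl | rfl
  · exact hab (card_le_one.1 h1 a (mem_filter.2 ⟨ha, hXa⟩) b (mem_filter.2 ⟨hb, hXb⟩))
  · exact hab (card_le_one.1 h2 a (mem_filter.2 ⟨ha, hXa⟩) b (mem_filter.2 ⟨hb, hXb⟩))

lemma eq_of_mem_twoEvent_of_eq_one (hω : ω ∈ twoEvent X m i m) {j : ℕ} (hj : j ∈ Icc 1 m)
    (hXj : X j ω = 1) : j = i := by
  by_contra hji
  rcases eq_or_ne j m with rfl | hjm
  · simp [hω.2.1] at hXj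
  · simp [hω.2.2 j hj hji hjm] at hXj

lemma eq_of_mem_twoEvent_of_eq_neg_one (hω : ω ∈ twoEvent X m i m) {j : ℕ} (hj : j ∈ Icc 1 m)
    (hXj : X j ω = -1) : j = m := by
  by_contra hjm
  rcases eq_or_ne j i with rfl | hji
  · simp [hω.1] at hXj
  · simp [hω.2.2 j hj hji hjm] at hXj

lemma eq_neg_one_or_of_mem_iInter_compl_contaminatedEvent (hω : ω ∈ twoEvent X m i m)
    (hi1 : 1 < i) (him : i < m) (hA : ∀ n ∈ Icc 2 m, ω ∉ contaminatedEvent X m n) :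
    X (m + 1) ω = -1 ∨ (X (m + 1) ω = 1 ∧ ∃ j ∈ Icc (m + 2) (m + i), X j ω ≠ 0) := by
  by_contra! hcon
  by_cases hplus : X (m + 1) ω = 1
  · -- block `i + 1` sees only the `+1` at `m + 1` and the `-1` at `m`
    refine hA (i + 1) (mem_Icc.2 ⟨by omega, by omega⟩)
      (mem_contaminatedEvent_of_unique (a := m + 1) (b := m) ?_ ?_)
    · intro j hj hXj
      rw [mem_Icc] at hj
      rcases (by omega : j ≤ m ∨ j = m + 1 ∨ m + 2 ≤ j) with hjm | rfl | hjm
      · have := eq_of_mem_twoEvent_of_eq_one hω (mem_Icc.2 ⟨by omega, hjm⟩) hXj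
        omega
      · rfl
      · simp [hcon.2 hplus j (mem_Icc.2 ⟨hjm, by omega⟩)] at hXj
    · intro j hj hXj
      rw [mem_Icc] at hj
      rcases (by omega : j ≤ m ∨ j = m + 1 ∨ m + 2 ≤ j) with hjm | rfl | hjm
      · exact eq_of_mem_twoEvent_of_eq_neg_one hω (mem_Icc.2 ⟨by omega, hjm⟩) hXj
      · simp [hplus] at hXj
      · simp [hcon.2 hplus j (mem_Icc.2 ⟨hjm, by omega⟩)] at hXj
  · -- otherwise block `2` sees only the `+1` at `i` and the `-1` at `m`
    refine hA 2 (mem_Icc.2 ⟨le_rfl, by omega⟩)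
      (mem_contaminatedEvent_of_unique (a := i) (b := m) ?_ ?_)
    · intro j hj hXj
      rw [mem_Icc] at hj
      rcases (by omega : j ≤ m ∨ j = m + 1) with hjm | rfl
      · exact eq_of_mem_twoEvent_of_eq_one hω (mem_Icc.2 ⟨by omega, hjm⟩) hXj
      · exact absurd hXj hplus
    · intro j hj hXj
      rw [mem_Icc] at hj
      rcases (by omega : j ≤ m ∨ j = m + 1) with hjm | rfl
      · exact eq_of_mem_twoEvent_of_eq_neg_one hω (mem_Icc.2 ⟨by omega, hjm⟩) hXj
      · exact absurd hXj hcon.1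

lemma mem_iInter_compl_contaminatedEvent_of_twoEvent (hω : ω ∈ twoEvent X m i m)
    (him : i < m) (hval : ∀ j, X j ω = 0 ∨ X j ω = 1 ∨ X j ω = -1)
    (h : X (m + 1) ω = -1 ∨ (X (m + 1) ω = 1 ∧ ∃ j ∈ Icc (m + 2) (m + i), X j ω ≠ 0)) :
    ∀ n ∈ Icc 2 m, ω ∉ contaminatedEvent X m n := by
  have hXi : X i ω = 1 := hω.1
  have hXm : X m ω = -1 := hω.2.1
  rcases h with hminus | ⟨hplus, t, ht, hXt⟩ <;> intro n hn <;> rw [mem_Icc] at hn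
  · exact notMem_contaminatedEvent_of_pair (Or.inr rfl) (a := m) (b := m + 1) (by omega)
      (mem_Icc.2 ⟨by omega, by omega⟩) (mem_Icc.2 ⟨by omega, by omega⟩) hXm hminus
  rw [mem_Icc] at ht
  rcases le_or_gt n i with hni | hin
  · exact notMem_contaminatedEvent_of_pair (Or.inl rfl) (a := i) (b := m + 1) (by omega)
      (mem_Icc.2 ⟨by omega, by omega⟩) (mem_Icc.2 ⟨by omega, by omega⟩) hXi hplus
  rcases hval t with hzero | hXt' | hXt'
  · exact absurd hzero hXt
  · exact notMem_contaminatedEvent_of_pair (Or.inl rfl) (a := t) (b := m + 1) (by omega)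
      (mem_Icc.2 ⟨by omega, by omega⟩) (mem_Icc.2 ⟨by omega, by omega⟩) hXt' hplus
  · exact notMem_contaminatedEvent_of_pair (Or.inr rfl) (a := t) (b := m) (by omega)
      (mem_Icc.2 ⟨by omega, by omega⟩) (mem_Icc.2 ⟨by omega, by omega⟩) hXt' hXm

lemma mem_iInter_compl_contaminatedEvent_iff (hω : ω ∈ twoEvent X m i m)
    (hval : ∀ j, X j ω = 0 ∨ X j ω = 1 ∨ X j ω = -1) (hi1 : 1 < i) (him : i < m) :
    ω ∈ ⋂ n ∈ Icc 2 m, (contaminatedEvent X m n)ᶜ ↔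
      X (m + 1) ω = -1 ∨ (X (m + 1) ω = 1 ∧ ∃ j ∈ Icc (m + 2) (m + i), X j ω ≠ 0) := by
  simp only [Set.mem_iInter, Set.mem_compl_iff]
  exact ⟨eq_neg_one_or_of_mem_iInter_compl_contaminatedEvent hω hi1 him,
    mem_iInter_compl_contaminatedEvent_of_twoEvent hω him hval⟩

end Blocks

def twoProfile (i m : ℕ) (v : ℤ) (j : ℕ) : ℤ :=
  if j = i then 1 else if j = m then -1 else if j = m + 1 then v else 0

section Profile

variable {Ω : Type*} {X : ℕ → Ω → ℤ} {m i N : ℕ} {v : ℤ} {ω : Ω}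

lemma twoProfile_left : twoProfile i m v i = 1 := by
  simp [twoProfile]

lemma twoProfile_right (him : i ≠ m) : twoProfile i m v m = -1 := by
  simp [twoProfile, him.symm]

lemma twoProfile_succ_right (him : i ≠ m + 1) : twoProfile i m v (m + 1) = v := by
  simp [twoProfile, him.symm]

lemma twoProfile_of_ne {j : ℕ} (hji : j ≠ i) (hjm : j ≠ m) (hjm1 : j ≠ m + 1) :
    twoProfile i m v j = 0 := by
  simp [twoProfile, hji, hjm, hjm1]

lemma mem_patternEvent_twoProfile_iff (hi1 : 1 ≤ i) (him : i < m) (hN : m + 1 ≤ N) :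
    ω ∈ patternEvent X (Icc 1 N) (twoProfile i m v) ↔
      ω ∈ twoEvent X m i m ∧ X (m + 1) ω = v ∧ ∀ j ∈ Icc (m + 2) N, X j ω = 0 := by
  have hXi : twoProfile i m v i = 1 := twoProfile_left
  have hXm : twoProfile i m v m = -1 := twoProfile_right him.ne
  have hXm1 : twoProfile i m v (m + 1) = v := twoProfile_succ_right (by omega)
  constructor
  · intro h
    refine ⟨⟨hXi ▸ h i (mem_Icc.2 ⟨hi1, by omega⟩), hXm ▸ h m (mem_Icc.2 ⟨by omega, by omega⟩),
      fun l hl hli hlm => ?_⟩, hXm1 ▸ h (m + 1) (mem_Icc.2 ⟨by omega, hN⟩), fun j hj => ?_⟩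
    · rw [mem_Icc] at hl
      rw [h l (mem_Icc.2 ⟨hl.1, by omega⟩), twoProfile_of_ne hli hlm (by omega)]
    · rw [mem_Icc] at hj
      rw [h j (mem_Icc.2 ⟨by omega, hj.2⟩), twoProfile_of_ne (by omega) (by omega) (by omega)]
  · rintro ⟨⟨hωi, hωm, hrest⟩, hv, htail⟩ j hj
    rw [mem_Icc] at hj
    rcases (by omega : j = i ∨ j = m ∨ j = m + 1 ∨ (j ≠ i ∧ j ≠ m ∧ j ≠ m + 1)) with
      rfl | rfl | rfl | ⟨hji, hjm, hjm1⟩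
    · rwa [hXi]
    · rwa [hXm]
    · rwa [hXm1]
    rw [twoProfile_of_ne hji hjm hjm1]
    rcases (by omega : j ≤ m ∨ m + 2 ≤ j) with hle | hge
    · exact hrest j (mem_Icc.2 ⟨hj.1, hle⟩) hji hjm
    · exact htail j (mem_Icc.2 ⟨hge, hj.2⟩)

lemma twoEvent_inter_iInter_compl_contaminatedEvent_s8
    (hval : ∀ j ω, X j ω = 0 ∨ X j ω = 1 ∨ X j ω = -1) (hi1 : 1 < i) (him : i < m) :
    twoEvent X m i m ∩ ⋂ n ∈ Icc 2 m, (contaminatedEvent X m n)ᶜ =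
      patternEvent X (Icc 1 (m + 1)) (twoProfile i m (-1)) ∪
        (patternEvent X (Icc 1 (m + 1)) (twoProfile i m 1) \
          patternEvent X (Icc 1 (m + i)) (twoProfile i m 1)) := by
  ext ω
  simp only [Set.mem_inter_iff, Set.mem_union, Set.mem_sdiff,
    mem_patternEvent_twoProfile_iff hi1.le him le_rfl,
    mem_patternEvent_twoProfile_iff hi1.le him (by omega : m + 1 ≤ m + i)]
  constructor
  · rintro ⟨hω, hA⟩
    rcases (mem_iInter_compl_contaminatedEvent_iff hω (hval · ω) hi1 him).1 hA with
      hminus | ⟨hplus, t, ht, hXt⟩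
    · exact Or.inl ⟨hω, hminus, fun j hj => absurd (mem_Icc.1 hj) (by omega)⟩
    · exact Or.inr ⟨⟨hω, hplus, fun j hj => absurd (mem_Icc.1 hj) (by omega)⟩,
        fun ⟨_, _, hzero⟩ => hXt (hzero t ht)⟩
  · rintro (⟨hω, hminus, -⟩ | ⟨⟨hω, hplus, -⟩, hnonzero⟩)
    · exact ⟨hω,
        (mem_iInter_compl_contaminatedEvent_iff hω (hval · ω) hi1 him).2 (Or.inl hminus)⟩
    · push Not at hnonzero
      exact ⟨hω, (mem_iInter_compl_contaminatedEvent_iff hω (hval · ω) hi1 him).2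
        (Or.inr ⟨hplus, hnonzero hω hplus⟩)⟩

lemma measureReal_patternEvent_twoProfile [MeasurableSpace Ω] {P : Measure Ω}
    (hindep : iIndepFun X P) {p q1 q2 r : ℝ} (h0 : ∀ j, P.real {ω | X j ω = 0} = p)
    (h1 : ∀ j, P.real {ω | X j ω = 1} = q1) (h2 : ∀ j, P.real {ω | X j ω = -1} = q2)
    (hv : ∀ j, P.real {ω | X j ω = v} = r) (hi1 : 1 ≤ i) (him : i < m) (hN : m + 1 ≤ N) :
    P.real (patternEvent X (Icc 1 N) (twoProfile i m v)) = q1 * q2 * r * p ^ (N - 3) := by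
  have hsub : {i, m, m + 1} ⊆ Icc 1 N := by
    intro j hj
    simp only [mem_insert, mem_singleton] at hj
    exact mem_Icc.2 (by omega)
  rw [measureReal_patternEvent hindep, prod_eq_prod_mul_pow_card_sdiff hsub (c := p)]
  · rw [prod_insert (by simp; omega), prod_insert (by simp), prod_singleton,
      twoProfile_left, twoProfile_right him.ne, twoProfile_succ_right (by omega), h1, h2, hv,
      card_insert_of_notMem (by simp; omega), card_pair (by simp), Nat.card_Icc,
      show N + 1 - 1 - (2 + 1) = N - 3 by omega]
    ring
  · intro j hj
    simp only [Finset.mem_sdiff, mem_insert, mem_singleton, not_or] at hj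
    rw [twoProfile_of_ne hj.2.1 hj.2.2.1 hj.2.2.2, h0]

end Profile

theorem Y_two_middle_last_general
    {Ω : Type*} [MeasurableSpace Ω] (P : Measure Ω) [IsProbabilityMeasure P]
    (X : ℕ → Ω → ℤ) (hmeas : ∀ i, Measurable (X i))
    (hindep : iIndepFun X P)
    (p q1 q2 : ℝ) (hp : 0 < p) (hq1 : 0 < q1) (hq2 : 0 < q2)
    (h0 : ∀ i, P {ω | X i ω = 0} = ENNReal.ofReal p)
    (h1 : ∀ i, P {ω | X i ω = 1} = ENNReal.ofReal q1)
    (h2 : ∀ i, P {ω | X i ω = -1} = ENNReal.ofReal q2)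
    (hval : ∀ i ω, X i ω = 0 ∨ X i ω = 1 ∨ X i ω = -1)
    (m i : ℕ) (hi1 : 1 < i) (him : i < m) :
    (P (twoEvent X m i m ∩ ⋂ n ∈ Finset.Icc 2 m, (contaminatedEvent X m n)ᶜ)).toReal =
      q1 * q2 * p ^ (m - 2) * (q1 * (1 - p ^ (i - 1)) + q2) := by
  have hreal : ∀ {c : ℤ} {r : ℝ}, 0 ≤ r → (∀ j, P {ω | X j ω = c} = ENNReal.ofReal r) →
      ∀ j, P.real {ω | X j ω = c} = r := fun hr h j => by
    rw [measureReal_def, h j, ENNReal.toReal_ofReal hr]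
  have hprob := fun {v : ℤ} {r : ℝ} {N : ℕ} (hv : ∀ j, P.real {ω | X j ω = v} = r) =>
    measureReal_patternEvent_twoProfile (N := N) hindep (hreal hp.le h0) (hreal hq1.le h1)
      (hreal hq2.le h2) hv hi1.le him
  have hmeasE {N : ℕ} {v : ℤ} : MeasurableSet (patternEvent X (Icc 1 N) (twoProfile i m v)) :=
    measurableSet_patternEvent hmeas
  have hdisj : Disjoint (patternEvent X (Icc 1 (m + 1)) (twoProfile i m (-1)))
      (patternEvent X (Icc 1 (m + 1)) (twoProfile i m 1)) :=
    disjoint_patternEvent (j := m + 1) (by simp) (by simp) (by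
      simp [twoProfile_succ_right (by omega : i ≠ m + 1)])
  have hsub : patternEvent X (Icc 1 (m + i)) (twoProfile i m 1) ⊆
      patternEvent X (Icc 1 (m + 1)) (twoProfile i m 1) :=
    patternEvent_anti (Icc_subset_Icc_right (by omega))
  rw [← measureReal_def, twoEvent_inter_iInter_compl_contaminatedEvent_s8 hval hi1 him,
    measureReal_union hdisj.disjoint_sdiff_right (hmeasE.diff hmeasE),
    measureReal_sdiff hsub hmeasE, hprob (hreal hq2.le h2) le_rfl,
    hprob (hreal hq1.le h1) le_rfl, hprob (hreal hq1.le h1) (by omega),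
    show m + 1 - 3 = m - 2 by omega, show m + i - 3 = (m - 2) + (i - 1) by omega, pow_add]
  ring

theorem Y_two_middle_last
    {Ω : Type*} [MeasurableSpace Ω] (P : Measure Ω) [IsProbabilityMeasure P]
    (X : ℕ → Ω → ℤ) (hmeas : ∀ i, Measurable (X i))
    (hindep : iIndepFun X P)
    (p q1 q2 : ℝ) (hp : 0 < p) (hq1 : 0 < q1) (hq2 : 0 < q2) (hsum : p + q1 + q2 = 1)
    (h0 : ∀ i, P {ω | X i ω = 0} = ENNReal.ofReal p)
    (h1 : ∀ i, P {ω | X i ω = 1} = ENNReal.ofReal q1)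
    (h2 : ∀ i, P {ω | X i ω = -1} = ENNReal.ofReal q2)
    (hval : ∀ i ω, X i ω = 0 ∨ X i ω = 1 ∨ X i ω = -1)
    (m i : ℕ) (hm : 2 ≤ m) (hi1 : 1 < i) (him : i < m) :
    (P (twoEvent X m i m ∩ ⋂ n ∈ Finset.Icc 2 m, (contaminatedEvent X m n)ᶜ)).toReal =
      q1 * q2 * p ^ (m - 2) * (q1 * (1 - p ^ (i - 1)) + q2) :=
  Y_two_middle_last_general P X hmeas hindep p q1 q2 hp hq1 hq2 h0 h1 h2 hval m i hi1 him
end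

section
/- With Y_i^{(+)} = P(A_1^{(+)}(i) ∩ Ā_2 ∩ ⋯ ∩ Ā_m) and Y_i^{(−)} = P(A_1^{(−)}(i) ∩ Ā_2 ∩ ⋯ ∩ Ā_m), one has ∑_{i=1}^m Y_i^{(+)} + ∑_{i=1}^m Y_i^{(−)} = p^{m−1} { (q_1² + q_2²) [ (m−1) + p/(p−1) ] + q_1 q_2/(p−1) − (q_1² + q_2²) p^{m−1}/(p−1) + q_1 q_2 [ (m−2) p^{m−2} − p^{m−2}/(p−1) ] }. -/
open MeasureTheory ProbabilityTheory Finset Filter Asymptotics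

/-!
On `A₁⁽⁺⁾(i)` the block starting at `2` can only fail to be `1+1` contaminated if `i ≥ 2` and
`X_{m+1} = +1`. Then every block starting at `n ≤ i` contains the two `+1`'s at `i` and `m+1`,
while for `n > i` the nonzero entries of the block starting at `n` lie among
`X_{m+1}, …, X_{n+m-1}`, a range growing with `n`; so all the blocks fail as soon as the one
starting at `i+1` does, i.e. as soon as `X_{m+2}, …, X_{m+i}` contain a `+1` or two `-1`'s.
The event is therefore the cylinder `X_i = X_{m+1} = +1`, `X_j = 0` elsewhere on `[1, m+1]`,
of probability `q₁² p^{m-1}`, minus the disjoint cylinders on `[1, m+i]` whose tail is zero or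
has a single `-1`. This gives `0` for `i = 1`, `q₁² p^{m-1}` for `i = m` and
`q₁² p^{m-1} (1 - p^{i-1} - (i-1) q₂ p^{i-2})` otherwise. The `-1` case is the `+1` case for
`-X`, and summing the arithmetico-geometric series gives the closed form.
-/

section Events

variable {Ω : Type*} {X : ℕ → Ω → ℤ} {ω : Ω} {m n i : ℕ}

def signCylinder (X : ℕ → Ω → ℤ) (s Spos Sneg : Finset ℕ) : Set Ω :=
  {ω | ∀ j ∈ s, X j ω = if j ∈ Spos then 1 else if j ∈ Sneg then -1 else 0}

theorem disjoint_signCylinder {s Spos Sneg Sneg' : Finset ℕ} {j : ℕ} (hj : j ∈ s)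
    (hpos : j ∉ Spos) (hneg : j ∈ Sneg) (hneg' : j ∉ Sneg') :
    Disjoint (signCylinder X s Spos Sneg) (signCylinder X s Spos Sneg') :=
  Set.disjoint_left.mpr fun ω h h' => by
    have := (h j hj).symm.trans (h' j hj)
    simp [hpos, hneg, hneg'] at this

theorem signCylinder_eq_biInter (s Spos Sneg : Finset ℕ) :
    signCylinder X s Spos Sneg =
      ⋂ j ∈ s, X j ⁻¹' {if j ∈ Spos then 1 else if j ∈ Sneg then -1 else 0} := by
  ext; simp [signCylinder]

theorem mem_contaminatedEvent_of_forall_eq {a b : ℕ}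
    (hpos : ∀ j ∈ Icc n (n + m - 1), X j ω = 1 → j = a)
    (hneg : ∀ j ∈ Icc n (n + m - 1), X j ω = -1 → j = b) : ω ∈ contaminatedEvent X m n := by
  refine ⟨card_le_one.mpr ?_, card_le_one.mpr ?_⟩ <;> simp only [mem_filter] <;> grind

theorem notMem_contaminatedEvent_of_pair_s10 {c : ℤ} {j k : ℕ} (hc : c = 1 ∨ c = -1)
    (hj : j ∈ Icc n (n + m - 1)) (hk : k ∈ Icc n (n + m - 1)) (hjk : j ≠ k)
    (hXj : X j ω = c) (hXk : X k ω = c) : ω ∉ contaminatedEvent X m n := by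
  rintro ⟨hpos, hneg⟩
  have : 1 < #((Icc n (n + m - 1)).filter (X · ω = c)) :=
    one_lt_card.mpr ⟨j, by simp [hj, hXj], k, by simp [hk, hXk], hjk⟩
  rcases hc with rfl | rfl <;> omega

theorem notMem_contaminatedEvent_mono {n' : ℕ}
    (h : ∀ j ∈ Icc n (n + m - 1), X j ω ≠ 0 → j ∈ Icc n' (n' + m - 1))
    (hω : ω ∉ contaminatedEvent X m n) : ω ∉ contaminatedEvent X m n' := by
  have key (c : ℤ) (hc : c ≠ 0) : (Icc n (n + m - 1)).filter (X · ω = c) ⊆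
      (Icc n' (n' + m - 1)).filter (X · ω = c) := by
    intro j hj
    rw [mem_filter] at hj ⊢
    exact ⟨h j hj.1 (hj.2 ▸ hc), hj.2⟩
  rintro ⟨hpos, hneg⟩
  exact hω ⟨(card_le_card (key 1 one_ne_zero)).trans hpos,
    (card_le_card (key (-1) (by norm_num))).trans hneg⟩

theorem plusEvent_window_two (hi : i ∈ Icc 1 m) (hω : ω ∈ plusEvent X m i)
    (h2 : ω ∉ contaminatedEvent X m 2) : 2 ≤ i ∧ X (m + 1) ω = 1 := by
  obtain ⟨hXi, hzero⟩ := hω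
  have hnz : ∀ j ∈ Icc 2 (2 + m - 1), X j ω ≠ 0 → j = i ∨ j = m + 1 := by
    intro j hj hXj
    by_contra! hne
    exact hXj (hzero j (by simp at hj ⊢; omega) hne.1)
  by_contra! h
  apply h2
  by_cases hi2 : 2 ≤ i
  · have hXm : X (m + 1) ω ≠ 1 := h hi2
    refine mem_contaminatedEvent_of_forall_eq (a := i) (b := m + 1) ?_ ?_ <;>
      intro j hj hXj <;> rcases hnz j hj (by rw [hXj]; norm_num) with rfl | rfl <;> grind
  · refine mem_contaminatedEvent_of_forall_eq (a := m + 1) (b := m + 1) ?_ ?_ <;>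
      intro j hj hXj <;> rcases hnz j hj (by rw [hXj]; norm_num) with rfl | rfl <;>
      simp only [mem_Icc] at hi hj <;> omega

theorem plusEvent_one_inter_iInter_compl (hm : 2 ≤ m) :
    plusEvent X m 1 ∩ ⋂ n ∈ Icc 2 m, (contaminatedEvent X m n)ᶜ = ∅ := by
  refine Set.eq_empty_of_forall_notMem fun ω ⟨hω, hA⟩ => ?_
  have := plusEvent_window_two (by simp; omega) hω
    (by simpa using Set.mem_iInter₂.mp hA 2 (by simp; omega))
  omega

theorem plusEvent_inter_iInter_compl (hi : 2 ≤ i) (him : i ≤ m) :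
    plusEvent X m i ∩ ⋂ n ∈ Icc 2 m, (contaminatedEvent X m n)ᶜ =
      signCylinder X (Icc 1 (m + 1)) {i, m + 1} ∅ ∩
        ⋂ n ∈ Icc (i + 1) m, (contaminatedEvent X m n)ᶜ := by
  ext ω
  simp only [Set.mem_inter_iff, Set.mem_iInter, Set.mem_compl_iff, mem_Icc]
  constructor
  · rintro ⟨hω, hA⟩
    have hXm := (plusEvent_window_two (by simp; omega) hω (hA 2 ⟨le_rfl, by omega⟩)).2
    refine ⟨fun j hj => ?_, fun n hn => hA n ⟨by omega, hn.2⟩⟩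
    obtain ⟨hXi, hzero⟩ := hω
    have := hzero j
    simp only [mem_Icc, mem_insert, mem_singleton, notMem_empty] at hj this ⊢
    grind
  · rintro ⟨hB, hA⟩
    have hXi := hB i (by simp; omega)
    have hXm := hB (m + 1) (by simp)
    refine ⟨⟨by simpa using hXi, fun j hj hji => by
      simp only [mem_Icc] at hj
      simpa [hji, show j ≠ m + 1 by omega] using hB j (by simp; omega)⟩,
      fun n hn => ?_⟩
    by_cases hni : n ≤ i
    · exact notMem_contaminatedEvent_of_pair_s10 (Or.inl rfl) (j := i) (k := m + 1)
        (by simp; omega) (by simp; omega) (by omega) (by simpa using hXi) (by simpa using hXm)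
    · exact hA n ⟨by omega, hn.2⟩

theorem signCylinder_inter_iInter_compl (him : i < m) :
    signCylinder X (Icc 1 (m + 1)) {i, m + 1} ∅ ∩
        ⋂ n ∈ Icc (i + 1) m, (contaminatedEvent X m n)ᶜ =
      signCylinder X (Icc 1 (m + 1)) {i, m + 1} ∅ \ contaminatedEvent X m (i + 1) := by
  ext ω
  simp only [Set.mem_inter_iff, Set.mem_sdiff, Set.mem_iInter, Set.mem_compl_iff]
  refine and_congr_right fun hB => ⟨fun hA => hA _ (by simp; omega), fun hA n hn => ?_⟩
  refine notMem_contaminatedEvent_mono (fun j hj hXj => ?_) hA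
  have := hB j
  simp only [mem_Icc, mem_insert, mem_singleton, notMem_empty] at hn hj this ⊢
  grind

theorem signCylinder_inter_contaminatedEvent_subset
    (hval : ∀ j ω, X j ω = 0 ∨ X j ω = 1 ∨ X j ω = -1) (hi : 1 ≤ i) (him : i ≤ m) :
    signCylinder X (Icc 1 (m + 1)) {i, m + 1} ∅ ∩ contaminatedEvent X m (i + 1) ⊆
      signCylinder X (Icc 1 (m + i)) {i, m + 1} ∅ ∪
        ⋃ k ∈ Icc (m + 2) (m + i), signCylinder X (Icc 1 (m + i)) {i, m + 1} {k} := by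
  rintro ω ⟨hB, hpos, hneg⟩
  have hXm : X (m + 1) ω = 1 := by simpa using hB (m + 1) (by simp)
  have hone : ∀ j ∈ Icc (m + 2) (m + i), X j ω ≠ 1 := fun j hj hXj => by
    have := card_le_one.mp hpos j (by simp at hj ⊢; omega) (m + 1) (by simp [hXm]; omega)
    simp only [mem_Icc] at hj
    omega
  have hmin : ∀ j ∈ Icc (m + 2) (m + i), ∀ k ∈ Icc (m + 2) (m + i),
      X j ω = -1 → X k ω = -1 → j = k := fun j hj k hk hXj hXk =>
    card_le_one.mp hneg j (by simp at hj ⊢; omega) k (by simp at hk ⊢; omega)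
  simp only [Set.mem_union, Set.mem_iUnion, exists_prop]
  by_cases hk : ∃ k ∈ Icc (m + 2) (m + i), X k ω = -1
  · obtain ⟨k, hk, hXk⟩ := hk
    refine Or.inr ⟨k, hk, fun j hj => ?_⟩
    have := hval j ω
    have := hB j
    simp only [mem_Icc, mem_insert, mem_singleton, notMem_empty] at hk hj hone hmin this ⊢
    grind
  · refine Or.inl fun j hj => ?_
    have := hval j ω
    have := hB j
    simp only [mem_Icc, mem_insert, mem_singleton, notMem_empty] at hk hj hone this ⊢
    grind

theorem signCylinder_union_subset_contaminatedEvent (hi : 1 ≤ i) :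
    signCylinder X (Icc 1 (m + i)) {i, m + 1} ∅ ∪
        ⋃ k ∈ Icc (m + 2) (m + i), signCylinder X (Icc 1 (m + i)) {i, m + 1} {k} ⊆
      signCylinder X (Icc 1 (m + 1)) {i, m + 1} ∅ ∩ contaminatedEvent X m (i + 1) := by
  refine Set.union_subset (fun ω hC => ⟨fun j hj => hC j (by simp at hj ⊢; omega),
    mem_contaminatedEvent_of_forall_eq (a := m + 1) (b := m + 1) ?_ ?_⟩)
    (Set.iUnion₂_subset fun k hk ω hC => ⟨fun j hj => by
      have := hC j (by simp at hj ⊢; omega)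
      simp only [mem_Icc, mem_insert, mem_singleton, notMem_empty] at hk hj this ⊢
      grind, mem_contaminatedEvent_of_forall_eq (a := m + 1) (b := k) ?_ ?_⟩)
  all_goals
    intro j hj hXj
    have := hC j (by simp at hj ⊢; omega)
    simp only [mem_Icc, mem_insert, mem_singleton, notMem_empty] at hj this
    grind

theorem signCylinder_inter_contaminatedEvent
    (hval : ∀ j ω, X j ω = 0 ∨ X j ω = 1 ∨ X j ω = -1) (hi : 1 ≤ i) (him : i ≤ m) :
    signCylinder X (Icc 1 (m + 1)) {i, m + 1} ∅ ∩ contaminatedEvent X m (i + 1) =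
      signCylinder X (Icc 1 (m + i)) {i, m + 1} ∅ ∪
        ⋃ k ∈ Icc (m + 2) (m + i), signCylinder X (Icc 1 (m + i)) {i, m + 1} {k} :=
  (signCylinder_inter_contaminatedEvent_subset hval hi him).antisymm
    (signCylinder_union_subset_contaminatedEvent hi)

theorem minusEvent_inter_iInter_compl (s : Finset ℕ) :
    minusEvent X m i ∩ ⋂ n ∈ s, (contaminatedEvent X m n)ᶜ =
      plusEvent (-X) m i ∩ ⋂ n ∈ s, (contaminatedEvent (-X) m n)ᶜ := by
  ext ω
  simp [minusEvent, plusEvent, contaminatedEvent, neg_eq_iff_eq_neg, and_comm]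

end Events

section Probability

variable {Ω : Type*} [MeasurableSpace Ω] {P : Measure Ω} {X : ℕ → Ω → ℤ} {p q1 q2 : ℝ}
  {m i : ℕ}

structure IsIIDTernary (P : Measure Ω) (X : ℕ → Ω → ℤ) (p q1 q2 : ℝ) : Prop where
  measurable : ∀ i, Measurable (X i)
  indep : iIndepFun X P
  measureReal_zero : ∀ i, P.real {ω | X i ω = 0} = p
  measureReal_one : ∀ i, P.real {ω | X i ω = 1} = q1
  measureReal_neg_one : ∀ i, P.real {ω | X i ω = -1} = q2
  eq_zero_or_one_or_neg_one : ∀ i ω, X i ω = 0 ∨ X i ω = 1 ∨ X i ω = -1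

namespace IsIIDTernary

theorem neg (hX : IsIIDTernary P X p q1 q2) : IsIIDTernary P (-X) p q2 q1 where
  measurable i := (hX.measurable i).neg
  indep := hX.indep.comp (fun _ => Neg.neg) fun _ => measurable_neg
  measureReal_zero i := by simpa using hX.measureReal_zero i
  measureReal_one i := by simpa [neg_eq_iff_eq_neg] using hX.measureReal_neg_one i
  measureReal_neg_one i := by simpa using hX.measureReal_one i
  eq_zero_or_one_or_neg_one i ω := by
    rcases hX.eq_zero_or_one_or_neg_one i ω with h | h | h <;> simp [h]

theorem measurableSet_signCylinder (hX : IsIIDTernary P X p q1 q2) (s Spos Sneg : Finset ℕ) :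
    MeasurableSet (signCylinder X s Spos Sneg) := by
  rw [signCylinder_eq_biInter]
  exact .biInter s.countable_toSet fun j _ => hX.measurable j (measurableSet_singleton _)

theorem measureReal_signCylinder (hX : IsIIDTernary P X p q1 q2) {s Spos Sneg : Finset ℕ}
    (hpos : Spos ⊆ s) (hneg : Sneg ⊆ s) (hd : Disjoint Spos Sneg) :
    P.real (signCylinder X s Spos Sneg) =
      q1 ^ #Spos * q2 ^ #Sneg * p ^ (#s - #Spos - #Sneg) := by
  have hfactor (j : ℕ) :
      P.real (X j ⁻¹' {if j ∈ Spos then 1 else if j ∈ Sneg then -1 else 0}) =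
        if j ∈ Spos then q1 else if j ∈ Sneg then q2 else p := by
    split_ifs
    exacts [hX.measureReal_one j, hX.measureReal_neg_one j, hX.measureReal_zero j]
  have hSneg : Sneg ⊆ s \ Spos := fun j hj => mem_sdiff.mpr ⟨hneg hj, disjoint_right.mp hd hj⟩
  rw [signCylinder_eq_biInter, measureReal_def, hX.indep.measure_inter_preimage_eq_mul _
    fun _ _ => measurableSet_singleton _, ENNReal.toReal_prod]
  simp_rw [← measureReal_def, hfactor]
  rw [prod_ite, prod_ite, prod_const, prod_const, prod_const, filter_mem_eq_inter,
    inter_eq_right.mpr hpos, filter_filter, filter_filter, ← mul_assoc,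
    ← card_sdiff_of_subset hpos, ← card_sdiff_of_subset hSneg]
  congr 4 <;> ext j <;> simp only [mem_filter] <;> grind [disjoint_right]

theorem measureReal_signCylinder_Icc_pair (hX : IsIIDTernary P X p q1 q2) {i a s : ℕ}
    {Sneg : Finset ℕ} (hi : 1 ≤ i) (hia : i < a) (has : a ≤ s) (hneg : Sneg ⊆ Icc (a + 1) s) :
    P.real (signCylinder X (Icc 1 s) {i, a} Sneg) = q1 ^ 2 * q2 ^ #Sneg * p ^ (s - 2 - #Sneg) := by
  have hnegs : Sneg ⊆ Icc 1 s := hneg.trans (Icc_subset_Icc (by omega) le_rfl)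
  have hd : Disjoint {i, a} Sneg := disjoint_left.mpr fun x hx hx' => by
    have := hneg hx'
    simp only [mem_Icc, mem_insert, mem_singleton] at hx this
    omega
  rw [hX.measureReal_signCylinder (by intro x; simp; omega) hnegs hd, card_pair hia.ne,
    Nat.card_Icc, Nat.add_sub_cancel]

theorem measureReal_plusEvent_self_inter [IsFiniteMeasure P] (hX : IsIIDTernary P X p q1 q2)
    (hm : 2 ≤ m) :
    P.real (plusEvent X m m ∩ ⋂ n ∈ Icc 2 m, (contaminatedEvent X m n)ᶜ) =
      q1 ^ 2 * p ^ (m - 1) := by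
  rw [plusEvent_inter_iInter_compl hm le_rfl, Icc_eq_empty (Nat.not_succ_le_self m)]
  simp only [notMem_empty, Set.iInter_of_empty, Set.iInter_univ, Set.inter_univ]
  rw [hX.measureReal_signCylinder_Icc_pair (by omega) (by omega) le_rfl (empty_subset _)]
  simp

theorem measureReal_signCylinder_union_biUnion [IsFiniteMeasure P]
    (hX : IsIIDTernary P X p q1 q2) {s Spos t : Finset ℕ} (hts : t ⊆ s) (hd : Disjoint Spos t) :
    P.real (signCylinder X s Spos ∅ ∪ ⋃ k ∈ t, signCylinder X s Spos {k}) =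
      P.real (signCylinder X s Spos ∅) + ∑ k ∈ t, P.real (signCylinder X s Spos {k}) := by
  have hmeas := hX.measurableSet_signCylinder s Spos
  have hdisj : Disjoint (signCylinder X s Spos ∅) (⋃ k ∈ t, signCylinder X s Spos {k}) :=
    Set.disjoint_iUnion₂_right.mpr fun k hk =>
      (disjoint_signCylinder (hts hk) (disjoint_right.mp hd hk) (mem_singleton_self k)
        (notMem_empty k)).symm
  have hpair : (t : Set ℕ).PairwiseDisjoint fun k => signCylinder X s Spos {k} :=
    fun k hk _ _ hkk' => disjoint_signCylinder (hts hk) (disjoint_right.mp hd hk)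
      (mem_singleton_self k) (by simpa using hkk')
  rw [measureReal_union hdisj (Finset.measurableSet_biUnion _ fun k _ => hmeas _)
      (measure_ne_top _ _) (measure_ne_top _ _),
    measureReal_biUnion_finset hpair fun k _ => hmeas _]

theorem measureReal_plusEvent_inter [IsFiniteMeasure P] (hX : IsIIDTernary P X p q1 q2) (j : ℕ)
    (hj : j + 3 ≤ m) :
    P.real (plusEvent X m (j + 2) ∩ ⋂ n ∈ Icc 2 m, (contaminatedEvent X m n)ᶜ) =
      q1 ^ 2 * p ^ (m - 1) * (1 - p ^ (j + 1) - (j + 1) * q2 * p ^ j) := by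
  have hBA := signCylinder_inter_contaminatedEvent hX.eq_zero_or_one_or_neg_one
    (i := j + 2) (m := m) (by omega) (by omega)
  have hmeas := hX.measurableSet_signCylinder (Icc 1 (m + (j + 2))) {j + 2, m + 1}
  have hcyl (S : Finset ℕ) (hS : S ⊆ Icc (m + 2) (m + (j + 2))) :=
    hX.measureReal_signCylinder_Icc_pair (a := m + 1) (by omega : 1 ≤ j + 2) (by omega)
      (by omega) hS
  have hd : Disjoint {j + 2, m + 1} (Icc (m + 2) (m + (j + 2))) := by
    simp only [disjoint_insert_left, disjoint_singleton_left, mem_Icc]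
    omega
  rw [plusEvent_inter_iInter_compl (by omega) (by omega),
    signCylinder_inter_iInter_compl (by omega), ← Set.sdiff_self_inter,
    measureReal_sdiff Set.inter_subset_left
      (hBA ▸ (hmeas _).union (Finset.measurableSet_biUnion _ fun k _ => hmeas _)), hBA,
    hX.measureReal_signCylinder_union_biUnion (Icc_subset_Icc (by omega) le_rfl) hd,
    hX.measureReal_signCylinder_Icc_pair (by omega : 1 ≤ j + 2) (by omega) le_rfl
      (empty_subset _),
    hcyl ∅ (empty_subset _), sum_congr rfl fun k hk => hcyl {k} (singleton_subset_iff.mpr hk)]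
  simp only [card_empty, card_singleton, sum_const, Nat.card_Icc, nsmul_eq_mul]
  rw [show m + 1 - 2 - 0 = m - 1 by omega, show m + (j + 2) - 2 - 0 = m - 1 + (j + 1) by omega,
    show m + (j + 2) - 2 - 1 = m - 1 + j by omega, show m + (j + 2) + 1 - (m + 2) = j + 1 by omega]
  push_cast
  ring

theorem sum_measureReal_plusEvent_inter [IsFiniteMeasure P] (hX : IsIIDTernary P X p q1 q2)
    (hm : 3 ≤ m) :
    ∑ i ∈ Icc 1 m, P.real (plusEvent X m i ∩ ⋂ n ∈ Icc 2 m, (contaminatedEvent X m n)ᶜ) =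
      q1 ^ 2 * p ^ (m - 1) *
        ((m - 1) - ∑ j ∈ range (m - 2), (p ^ (j + 1) + (j + 1) * q2 * p ^ j)) := by
  rw [← Ico_add_one_right_eq_Icc, sum_Ico_succ_top (by omega),
    sum_eq_sum_Ico_succ_bot (by omega), sum_Ico_eq_sum_range,
    plusEvent_one_inter_iInter_compl (by omega), measureReal_empty,
    hX.measureReal_plusEvent_self_inter (by omega),
    sum_congr rfl fun j hj => (add_comm (1 + 1) j).symm ▸
      hX.measureReal_plusEvent_inter j (by simp at hj; omega), ← mul_sum]
  simp only [sum_sub_distrib, sum_add_distrib, sum_const, card_range]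
  rw [nsmul_eq_mul, Nat.cast_sub (by omega)]
  push_cast
  ring

end IsIIDTernary

end Probability

theorem sub_one_sq_mul_sum_range_succ_mul_pow {R : Type*} [CommRing R] (x : R) (n : ℕ) :
    (x - 1) ^ 2 * ∑ j ∈ range n, (j + 1) * x ^ j = n * x ^ (n + 1) - (n + 1) * x ^ n + 1 := by
  induction n with
  | zero => simp
  | succ n ih =>
    rw [sum_range_succ, mul_add, ih]
    push_cast
    ring

theorem sum_plus_add_sum_minus_eq {p q1 q2 : ℝ} (hp : p ≠ 1) (hq : q1 + q2 = 1 - p) {m : ℕ}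
    (hm : 2 ≤ m) :
    q1 ^ 2 * p ^ (m - 1) *
        ((m - 1) - ∑ j ∈ range (m - 2), (p ^ (j + 1) + (j + 1) * q2 * p ^ j)) +
      q2 ^ 2 * p ^ (m - 1) *
        ((m - 1) - ∑ j ∈ range (m - 2), (p ^ (j + 1) + (j + 1) * q1 * p ^ j)) =
    p ^ (m - 1) *
      ((q1 ^ 2 + q2 ^ 2) * (((m : ℝ) - 1) + p / (p - 1)) + q1 * q2 / (p - 1) -
        (q1 ^ 2 + q2 ^ 2) * p ^ (m - 1) / (p - 1) +
        q1 * q2 * (((m : ℝ) - 2) * p ^ (m - 2) - p ^ (m - 2) / (p - 1))) := by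
  obtain ⟨n, rfl⟩ : ∃ n, m = n + 2 := ⟨m - 2, by omega⟩
  have hp' : p - 1 ≠ 0 := sub_ne_zero.mpr hp
  have hsplit (q : ℝ) : ∑ j ∈ range n, (p ^ (j + 1) + (j + 1) * q * p ^ j) =
      p * ∑ j ∈ range n, p ^ j + q * ∑ j ∈ range n, (j + 1) * p ^ j := by
    rw [sum_add_distrib, mul_sum, mul_sum]
    congr 1 <;> exact sum_congr rfl fun j _ => by ring
  have hgeom : ∑ j ∈ range n, p ^ j = (p ^ n - 1) / (p - 1) := geom_sum_eq hp n
  have hderiv : ∑ j ∈ range n, ((j : ℝ) + 1) * p ^ j =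
      (n * p ^ (n + 1) - (n + 1) * p ^ n + 1) / (p - 1) ^ 2 := by
    rw [eq_div_iff (pow_ne_zero 2 hp'), mul_comm, sub_one_sq_mul_sum_range_succ_mul_pow]
  obtain rfl : q2 = 1 - p - q1 := by linarith
  rw [show n + 2 - 1 = n + 1 by omega, Nat.add_sub_cancel, hsplit, hsplit, hgeom, hderiv]
  push_cast
  field_simp
  ring

theorem sum_Y_plus_minus
    {Ω : Type*} [MeasurableSpace Ω] (P : Measure Ω) [IsProbabilityMeasure P]
    (X : ℕ → Ω → ℤ) (hmeas : ∀ i, Measurable (X i))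
    (hindep : iIndepFun X P)
    (p q1 q2 : ℝ) (hp : 0 < p) (hq1 : 0 < q1) (hq2 : 0 < q2) (hsum : p + q1 + q2 = 1)
    (h0 : ∀ i, P {ω | X i ω = 0} = ENNReal.ofReal p)
    (h1 : ∀ i, P {ω | X i ω = 1} = ENNReal.ofReal q1)
    (h2 : ∀ i, P {ω | X i ω = -1} = ENNReal.ofReal q2)
    (hval : ∀ i ω, X i ω = 0 ∨ X i ω = 1 ∨ X i ω = -1)
    (hp1 : p < 1) (m : ℕ) (hm : 3 ≤ m) :
    (∑ i ∈ Finset.Icc 1 m, (P (plusEvent X m i ∩ ⋂ n ∈ Finset.Icc 2 m, (contaminatedEvent X m n)ᶜ)).toReal) +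
      (∑ i ∈ Finset.Icc 1 m, (P (minusEvent X m i ∩ ⋂ n ∈ Finset.Icc 2 m, (contaminatedEvent X m n)ᶜ)).toReal) =
    p ^ (m - 1) *
      ((q1 ^ 2 + q2 ^ 2) * (((m : ℝ) - 1) + p / (p - 1)) + q1 * q2 / (p - 1) -
        (q1 ^ 2 + q2 ^ 2) * p ^ (m - 1) / (p - 1) +
        q1 * q2 * (((m : ℝ) - 2) * p ^ (m - 2) - p ^ (m - 2) / (p - 1))) := by
  have hX : IsIIDTernary P X p q1 q2 :=
    { measurable := hmeas
      indep := hindep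
      measureReal_zero := fun i => by rw [measureReal_def, h0, ENNReal.toReal_ofReal hp.le]
      measureReal_one := fun i => by rw [measureReal_def, h1, ENNReal.toReal_ofReal hq1.le]
      measureReal_neg_one := fun i => by rw [measureReal_def, h2, ENNReal.toReal_ofReal hq2.le]
      eq_zero_or_one_or_neg_one := hval }
  simp only [← measureReal_def, minusEvent_inter_iInter_compl]
  rw [hX.sum_measureReal_plusEvent_inter hm, hX.neg.sum_measureReal_plusEvent_inter hm]
  exact sum_plus_add_sum_minus_eq hp1.ne (by linarith) (by omega)
end
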